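/- arXiv:2411.02802 — 10 statements merged into one kernel-verified Lean document; each statement's English description precedes it below -/
import Mathlib

section
/- Let m ∈ ℝ, m₀ := max{0, m}, and fix r₀ > 2m₀ and an integer ℓ ≥ 0. Suppose a : [r₀,∞) → ℝ is twice continuously differentiable, solves the Schwarzschild radial ODE with parameters (m, r₀, ℓ), satisfies the Bartnik initial condition, and satisfies a(r) → 0 and a'(r) → 0 as r → ∞. Then a(r) = 0 for all r ≥ r₀. -/
/-!
Write `b = r (r - 2m) a'` and `C` for the constant term of the equation, so that
`b' = (4m² / (r (r - 2m)) + ℓ (ℓ + 1)) a - 2m C / (r (r - 2m))`.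
For `ℓ = 0` the Wronskians of `a - C / (2m)` with the solutions `r / (r - 2m)` and `(r - 2m) / r`
of the homogeneous equation are first integrals; letting `r → ∞` in the relation between them
forces `m a(r₀) = 0`, hence `b ≡ 0`, so `a` is constant and thus zero.
For `ℓ ≥ 1` the same two quantities are nondecreasing when `a ≥ 0` and, by the Bartnik condition,
nonnegative at `r₀`; so `a ≥ 0` forces `b ≥ 0`, i.e. `a` is nondecreasing, and the decay gives
`a ≤ 0`. A maximum principle excludes a positive maximum of `a` when `m C ≤ 0`: at `r₀` by the
Bartnik condition, in the interior because there `b = 0` while the equation gives `b' > 0`.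
Since `C` changes sign with `a`, after replacing `a` by `-a` if necessary we get `a ≤ 0`, and
then `-a ≥ 0` gives `a ≥ 0`.
-/

open Set Filter Topology

theorem IsLocalMax.hasDerivAt_deriv_nonpos {f f' : ℝ → ℝ} {x f'' : ℝ} (h : IsLocalMax f x)
    (hf : ∀ᶠ y in 𝓝 x, HasDerivAt f (f' y) y) (hf' : HasDerivAt f' f'' x) : f'' ≤ 0 := by
  by_contra! hpos
  have hderiv : deriv f =ᶠ[𝓝 x] f' := hf.mono fun y hy => hy.deriv
  have hmin : IsLocalMin f x :=
    isLocalMin_of_deriv_deriv_pos (by rwa [hderiv.deriv_eq, hf'.deriv])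
      (by rw [hderiv.eq_of_nhds]; exact h.hasDerivAt_eq_zero hf.self_of_nhds)
      hf.self_of_nhds.continuousAt
  have hconst : ∀ᶠ y in 𝓝 x, f' y = 0 := by
    have hloc : f =ᶠ[𝓝 x] fun _ => f x := (hmin.and h).mono fun y hy => le_antisymm hy.2 hy.1
    filter_upwards [hloc.eventually_nhds, hf] with y hy hfy
    exact hfy.unique ((hasDerivAt_const y (f x)).congr_of_eventuallyEq hy)
  exact hpos.ne' (hf'.unique ((hasDerivAt_const x 0).congr_of_eventuallyEq hconst))

theorem HasDerivWithinAt.nonpos_of_isMaxOn_Ici {f : ℝ → ℝ} {x f' : ℝ}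
    (hf : HasDerivWithinAt f f' (Ici x) x) (hmax : IsMaxOn f (Ici x) x) : f' ≤ 0 := by
  have := hmax.localize.hasFDerivWithinAt_nonpos hf.hasFDerivWithinAt (y := 1)
    (mem_posTangentConeAt_of_segment_subset (by simp [segment_eq_Icc, Icc_subset_Ici_self]))
  simpa using this

theorem exists_isMaxOn_Ici_of_tendsto {f : ℝ → ℝ} {x y : ℝ} (hy : y ∈ Ici x)
    (hfy : 0 < f y) (hf : ContinuousOn f (Ici x)) (hlim : Tendsto f atTop (𝓝 0)) :
    ∃ ρ ∈ Ici x, IsMaxOn f (Ici x) ρ := by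
  obtain ⟨R, hR⟩ := eventually_atTop.1 (hlim.eventually_lt_const hfy)
  have hyR : y ∈ Icc x (max R y) := ⟨hy, le_max_right R y⟩
  obtain ⟨ρ, hρ, hmax⟩ := isCompact_Icc.exists_isMaxOn ⟨y, hyR⟩ (hf.mono Icc_subset_Ici_self)
  refine ⟨ρ, hρ.1, fun z hz => ?_⟩
  rcases le_or_gt z (max R y) with hzR | hRz
  · exact hmax ⟨hz, hzR⟩
  · exact (hR z (le_of_max_le_left hRz.le)).le.trans (hmax hyR)

theorem monotoneOn_Ici_of_hasDerivWithinAt_nonneg {f f' : ℝ → ℝ} {x : ℝ}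
    (hf : ∀ y ∈ Ici x, HasDerivWithinAt f (f' y) (Ici x) y) (hf' : ∀ y ∈ Ioi x, 0 ≤ f' y) :
    MonotoneOn f (Ici x) :=
  monotoneOn_of_hasDerivWithinAt_nonneg (convex_Ici x) (fun y hy => (hf y hy).continuousWithinAt)
    (fun y hy => (hf y (interior_subset hy)).mono interior_subset) (by simpa using hf')

theorem eqOn_Ici_of_hasDerivWithinAt_zero {f : ℝ → ℝ} {x : ℝ}
    (hf : ∀ y ∈ Ici x, HasDerivWithinAt f 0 (Ici x) y) : ∀ y ∈ Ici x, f y = f x := by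
  have hmono := monotoneOn_Ici_of_hasDerivWithinAt_nonneg hf fun _ _ => le_rfl
  have hanti := monotoneOn_Ici_of_hasDerivWithinAt_nonneg (fun y hy => (hf y hy).neg)
    fun _ _ => by simp
  intro y hy
  exact le_antisymm (by simpa using hanti self_mem_Ici hy hy) (hmono self_mem_Ici hy hy)

theorem MonotoneOn.le_of_tendsto_atTop {f : ℝ → ℝ} {x l : ℝ} (hf : MonotoneOn f (Ici x))
    (hlim : Tendsto f atTop (𝓝 l)) : ∀ y ∈ Ici x, f y ≤ l := fun y hy =>
  ge_of_tendsto hlim (eventually_atTop.2 ⟨y, fun _ hz => hf hy (mem_Ici.2 (hy.trans hz)) hz⟩)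

theorem tendsto_sub_div_self_atTop (c : ℝ) :
    Tendsto (fun r : ℝ => (r - c) / r) atTop (𝓝 1) := by
  have h : Tendsto (fun r : ℝ => 1 - c * r⁻¹) atTop (𝓝 (1 - c * 0)) :=
    tendsto_const_nhds.sub (tendsto_inv_atTop_zero.const_mul c)
  rw [mul_zero, sub_zero] at h
  exact h.congr' ((eventually_ne_atTop 0).mono fun r hr => by field_simp)

/-- `L` stands for `ℓ (ℓ + 1)`. -/
structure IsRadialSolution (m r₀ L C : ℝ) (a a' : ℝ → ℝ) : Prop where
  left_pos : 0 < r₀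
  two_mul_lt_left : 2 * m < r₀
  hasDerivWithinAt : ∀ r ∈ Ici r₀, HasDerivWithinAt a (a' r) (Ici r₀) r
  hasDerivWithinAt_flux : ∀ r ∈ Ici r₀, HasDerivWithinAt (fun s => s * (s - 2 * m) * a' s)
    ((4 * m ^ 2 / (r * (r - 2 * m)) + L) * a r - 2 * m / (r * (r - 2 * m)) * C) (Ici r₀) r

/-- Given the Bartnik condition `flux_left`, the constant
`C = (4m - r₀) a(r₀) + r₀ (r₀ - 2m) a'(r₀)` of the equation takes the form `const_eq`. -/
structure IsBartnikSolution (m r₀ L C : ℝ) (a a' : ℝ → ℝ) : Prop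
    extends IsRadialSolution m r₀ L C a a' where
  flux_left : r₀ * (r₀ - 2 * m) * a' r₀ = (L * r₀ / 2 - m) * a r₀
  const_eq : C = (3 * m - r₀ + L * r₀ / 2) * a r₀

/- For `L = 0`, `a - C / (2m)` solves the homogeneous equation, which has the solutions
`r / (r - 2m)` and `(r - 2m) / r`. These are the Wronskians, weighted by `r (r - 2m)`, of
`a - C / (2m)` with those two solutions, written so as to make sense for `m = 0` too. -/

noncomputable def wronskianPlus (m C : ℝ) (a a' : ℝ → ℝ) (r : ℝ) : ℝ :=
  (r * (r - 2 * m) * a' r + 2 * m * a r - C) * (r / (r - 2 * m))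

noncomputable def wronskianMinus (m C : ℝ) (a a' : ℝ → ℝ) (r : ℝ) : ℝ :=
  (r * (r - 2 * m) * a' r - 2 * m * a r + C) * ((r - 2 * m) / r)

section Algebra

variable {m C r : ℝ} {a a' : ℝ → ℝ}

theorem two_mul_flux_eq (hr : r ≠ 0) (hrm : r - 2 * m ≠ 0) :
    2 * (r * (r - 2 * m) * a' r) = wronskianPlus m C a a' r * ((r - 2 * m) / r)
      + wronskianMinus m C a a' r * (r / (r - 2 * m)) := by
  unfold wronskianPlus wronskianMinus
  field_simp
  ring

theorem four_mul_sub_eq (hr : r ≠ 0) (hrm : r - 2 * m ≠ 0) :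
    4 * m * a r - 2 * C = wronskianPlus m C a a' r * ((r - 2 * m) / r)
      - wronskianMinus m C a a' r * (r / (r - 2 * m)) := by
  have h : r / (r - 2 * m) * ((r - 2 * m) / r) = 1 := by field_simp
  unfold wronskianPlus wronskianMinus
  linear_combination (-(r * (r - 2 * m) * a' r + 2 * m * a r - C)
    + (r * (r - 2 * m) * a' r - 2 * m * a r + C)) * h

end Algebra

namespace IsRadialSolution

variable {m r₀ L C r : ℝ} {a a' : ℝ → ℝ}

theorem pos_of_mem (hs : IsRadialSolution m r₀ L C a a') (hr : r ∈ Ici r₀) : 0 < r :=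
  hs.left_pos.trans_le hr

theorem sub_pos_of_mem (hs : IsRadialSolution m r₀ L C a a') (hr : r ∈ Ici r₀) :
    0 < r - 2 * m :=
  sub_pos.2 (hs.two_mul_lt_left.trans_le hr)

theorem continuousOn (hs : IsRadialSolution m r₀ L C a a') : ContinuousOn a (Ici r₀) :=
  fun r hr => (hs.hasDerivWithinAt r hr).continuousWithinAt

theorem neg (hs : IsRadialSolution m r₀ L C a a') :
    IsRadialSolution m r₀ L (-C) (-a) (-a') where
  left_pos := hs.left_pos
  two_mul_lt_left := hs.two_mul_lt_left
  hasDerivWithinAt r hr := (hs.hasDerivWithinAt r hr).neg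
  hasDerivWithinAt_flux r hr := by
    refine (hs.hasDerivWithinAt_flux r hr).neg.congr_deriv ?_ |>.congr (fun s _ => ?_) ?_ <;>
      simp only [Pi.neg_apply] <;> ring

theorem hasDerivWithinAt_wronskianPlus (hs : IsRadialSolution m r₀ L C a a')
    (hr : r ∈ Ici r₀) :
    HasDerivWithinAt (wronskianPlus m C a a') (L * a r * (r / (r - 2 * m))) (Ici r₀) r := by
  have hr0 := (hs.pos_of_mem hr).ne'
  have hrm : r - m * 2 ≠ 0 := by linarith [hs.sub_pos_of_mem hr]
  have hφ : HasDerivAt (fun s : ℝ => s / (s - 2 * m))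
      ((1 * (r - 2 * m) - r * 1) / (r - 2 * m) ^ 2) r :=
    (hasDerivAt_id r).div ((hasDerivAt_id r).sub_const (2 * m)) (hs.sub_pos_of_mem hr).ne'
  refine ((((hs.hasDerivWithinAt_flux r hr).add ((hs.hasDerivWithinAt r hr).const_mul (2 * m))
    ).sub_const C).mul hφ.hasDerivWithinAt).congr_deriv ?_
  simp only [Pi.add_apply]
  field_simp
  ring

theorem hasDerivWithinAt_wronskianMinus (hs : IsRadialSolution m r₀ L C a a')
    (hr : r ∈ Ici r₀) :
    HasDerivWithinAt (wronskianMinus m C a a') (L * a r * ((r - 2 * m) / r)) (Ici r₀) r := by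
  have hr0 := (hs.pos_of_mem hr).ne'
  have hrm : r - m * 2 ≠ 0 := by linarith [hs.sub_pos_of_mem hr]
  have hψ : HasDerivAt (fun s : ℝ => (s - 2 * m) / s) ((1 * r - (r - 2 * m) * 1) / r ^ 2) r :=
    ((hasDerivAt_id r).sub_const (2 * m)).div (hasDerivAt_id r) hr0
  refine ((((hs.hasDerivWithinAt_flux r hr).sub ((hs.hasDerivWithinAt r hr).const_mul (2 * m))
    ).add_const C).mul hψ.hasDerivWithinAt).congr_deriv ?_
  simp only [Pi.sub_apply]
  field_simp
  ring

theorem monotoneOn_wronskianPlus (hs : IsRadialSolution m r₀ L C a a') (hL : 0 ≤ L)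
    (hnn : ∀ r ∈ Ici r₀, 0 ≤ a r) : MonotoneOn (wronskianPlus m C a a') (Ici r₀) := by
  refine monotoneOn_Ici_of_hasDerivWithinAt_nonneg
    (fun r hr => hs.hasDerivWithinAt_wronskianPlus hr) fun r hr => ?_
  have := hs.pos_of_mem (mem_Ici_of_Ioi hr)
  have := hs.sub_pos_of_mem (mem_Ici_of_Ioi hr)
  have := hnn r (mem_Ici_of_Ioi hr)
  positivity

theorem monotoneOn_wronskianMinus (hs : IsRadialSolution m r₀ L C a a') (hL : 0 ≤ L)
    (hnn : ∀ r ∈ Ici r₀, 0 ≤ a r) : MonotoneOn (wronskianMinus m C a a') (Ici r₀) := by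
  refine monotoneOn_Ici_of_hasDerivWithinAt_nonneg
    (fun r hr => hs.hasDerivWithinAt_wronskianMinus hr) fun r hr => ?_
  have := hs.pos_of_mem (mem_Ici_of_Ioi hr)
  have := hs.sub_pos_of_mem (mem_Ici_of_Ioi hr)
  have := hnn r (mem_Ici_of_Ioi hr)
  positivity

theorem nonpos_of_flux_nonneg (hs : IsRadialSolution m r₀ L C a a')
    (hflux : ∀ r ∈ Ici r₀, 0 ≤ r * (r - 2 * m) * a' r) (hlim : Tendsto a atTop (𝓝 0)) :
    ∀ r ∈ Ici r₀, a r ≤ 0 := by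
  refine (monotoneOn_Ici_of_hasDerivWithinAt_nonneg hs.hasDerivWithinAt fun r hr => ?_
    ).le_of_tendsto_atTop hlim
  have hr := mem_Ici_of_Ioi hr
  exact (mul_nonneg_iff_of_pos_left (mul_pos (hs.pos_of_mem hr) (hs.sub_pos_of_mem hr))).1
    (hflux r hr)

theorem flux_deriv_nonpos_of_isLocalMax (hs : IsRadialSolution m r₀ L C a a') (hr : r₀ < r)
    (hmax : IsLocalMax a r) :
    (4 * m ^ 2 / (r * (r - 2 * m)) + L) * a r - 2 * m / (r * (r - 2 * m)) * C ≤ 0 := by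
  have hnhds : Ici r₀ ∈ 𝓝 r := Ici_mem_nhds hr
  have hp : 0 < r * (r - 2 * m) := mul_pos (hs.pos_of_mem hr.le) (hs.sub_pos_of_mem hr.le)
  have hcrit : a' r = 0 :=
    hmax.hasDerivAt_eq_zero ((hs.hasDerivWithinAt r hr.le).hasDerivAt hnhds)
  have hflux := (hs.hasDerivWithinAt_flux r hr.le).hasDerivAt hnhds
  -- at a critical point of `a`, `a'' = b' / (r (r - 2m))`
  have hsecond : HasDerivAt a' (((4 * m ^ 2 / (r * (r - 2 * m)) + L) * a r
      - 2 * m / (r * (r - 2 * m)) * C) / (r * (r - 2 * m))) r := by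
    have hpoly : HasDerivAt (fun s : ℝ => s * (s - 2 * m)) (1 * (r - 2 * m) + r * 1) r :=
      (hasDerivAt_id r).mul ((hasDerivAt_id r).sub_const (2 * m))
    refine ((hflux.div hpoly hp.ne').congr_deriv ?_).congr_of_eventuallyEq ?_
    · rw [hcrit, mul_zero, zero_mul, sub_zero, sq (r * (r - 2 * m)), mul_div_mul_right _ _ hp.ne']
    · filter_upwards [hnhds] with s hs'
      exact (mul_div_cancel_left₀ _
        (mul_pos (hs.pos_of_mem hs') (hs.sub_pos_of_mem hs')).ne').symm
  have h := hmax.hasDerivAt_deriv_nonpos (by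
    filter_upwards [Ioi_mem_nhds hr] with s hs'
    exact (hs.hasDerivWithinAt s (mem_Ici_of_Ioi hs')).hasDerivAt (Ici_mem_nhds hs')) hsecond
  simpa using (div_le_iff₀ hp).1 h

theorem wronskianPlus_eq_of_L_eq_zero (hs : IsRadialSolution m r₀ 0 C a a') :
    ∀ r ∈ Ici r₀, wronskianPlus m C a a' r = wronskianPlus m C a a' r₀ :=
  eqOn_Ici_of_hasDerivWithinAt_zero fun r hr => by
    simpa using hs.hasDerivWithinAt_wronskianPlus hr

theorem wronskianMinus_eq_of_L_eq_zero (hs : IsRadialSolution m r₀ 0 C a a') :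
    ∀ r ∈ Ici r₀, wronskianMinus m C a a' r = wronskianMinus m C a a' r₀ :=
  eqOn_Ici_of_hasDerivWithinAt_zero fun r hr => by
    simpa using hs.hasDerivWithinAt_wronskianMinus hr

theorem eq_zero_of_flux_eq_zero (hs : IsRadialSolution m r₀ L C a a')
    (hflux : ∀ r ∈ Ici r₀, r * (r - 2 * m) * a' r = 0) (hlim : Tendsto a atTop (𝓝 0)) :
    ∀ r ∈ Ici r₀, a r = 0 := by
  have hle := hs.nonpos_of_flux_nonneg (fun r hr => (hflux r hr).ge) hlim
  have hge := hs.neg.nonpos_of_flux_nonneg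
    (fun r hr => by simp only [Pi.neg_apply, mul_neg, hflux r hr, neg_zero, le_refl])
    (by rw [← neg_zero]; exact hlim.neg)
  exact fun r hr => le_antisymm (hle r hr) (neg_nonpos.1 (hge r hr))

end IsRadialSolution

namespace IsBartnikSolution

variable {m r₀ L C : ℝ} {a a' : ℝ → ℝ}

theorem neg (hs : IsBartnikSolution m r₀ L C a a') :
    IsBartnikSolution m r₀ L (-C) (-a) (-a') where
  toIsRadialSolution := hs.toIsRadialSolution.neg
  flux_left := by simp only [Pi.neg_apply]; linear_combination -hs.flux_left
  const_eq := by simp only [Pi.neg_apply]; linear_combination -hs.const_eq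

theorem wronskianPlus_left (hs : IsBartnikSolution m r₀ L C a a') :
    wronskianPlus m C a a' r₀ = r₀ * a r₀ := by
  have := hs.sub_pos_of_mem self_mem_Ici
  unfold wronskianPlus
  rw [hs.flux_left, hs.const_eq]
  field_simp
  ring

theorem wronskianMinus_left (hs : IsBartnikSolution m r₀ L C a a') :
    wronskianMinus m C a a' r₀ = (r₀ - 2 * m) * (L - 1) * a r₀ := by
  have := hs.left_pos
  unfold wronskianMinus
  rw [hs.flux_left, hs.const_eq]
  field_simp
  ring

theorem flux_nonneg_of_nonneg (hs : IsBartnikSolution m r₀ L C a a') (hL : 1 ≤ L)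
    (hnn : ∀ r ∈ Ici r₀, 0 ≤ a r) : ∀ r ∈ Ici r₀, 0 ≤ r * (r - 2 * m) * a' r := by
  intro r hr
  have hr0 := hs.pos_of_mem hr
  have hrm := hs.sub_pos_of_mem hr
  have ha₀ := hnn r₀ self_mem_Ici
  have hplus : 0 ≤ wronskianPlus m C a a' r := by
    have := hs.monotoneOn_wronskianPlus (by linarith) hnn self_mem_Ici hr hr
    rw [hs.wronskianPlus_left] at this
    exact (mul_nonneg hs.left_pos.le ha₀).trans this
  have hminus : 0 ≤ wronskianMinus m C a a' r := by
    have := hs.monotoneOn_wronskianMinus (by linarith) hnn self_mem_Ici hr hr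
    rw [hs.wronskianMinus_left] at this
    refine le_trans ?_ this
    have := hs.sub_pos_of_mem (self_mem_Ici (a := r₀))
    have : 0 ≤ L - 1 := by linarith
    positivity
  have := two_mul_flux_eq (a := a) (a' := a') (C := C) hr0.ne' hrm.ne'
  have : 0 ≤ wronskianPlus m C a a' r * ((r - 2 * m) / r)
    + wronskianMinus m C a a' r * (r / (r - 2 * m)) := by positivity
  linarith

theorem nonpos_of_mul_nonpos (hs : IsBartnikSolution m r₀ L C a a') (hL : 1 ≤ L)
    (hmC : m * C ≤ 0) (hlim : Tendsto a atTop (𝓝 0)) : ∀ r ∈ Ici r₀, a r ≤ 0 := by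
  by_contra! hpos
  obtain ⟨x, hx, hax⟩ := hpos
  obtain ⟨ρ, hρ, hmax⟩ := exists_isMaxOn_Ici_of_tendsto hx hax hs.continuousOn hlim
  have haρ : 0 < a ρ := hax.trans_le (hmax hx)
  rcases (mem_Ici.1 hρ).eq_or_lt with rfl | hlt
  · have h1 : a' r₀ ≤ 0 := (hs.hasDerivWithinAt r₀ hρ).nonpos_of_isMaxOn_Ici hmax
    have h2 : 0 < (L * r₀ / 2 - m) * a r₀ :=
      mul_pos (by nlinarith [hs.left_pos, hs.two_mul_lt_left]) haρ
    have h3 := mul_nonpos_of_nonneg_of_nonpos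
      (mul_pos hs.left_pos (hs.sub_pos_of_mem hρ)).le h1
    linarith [hs.flux_left]
  · have hp : 0 < ρ * (ρ - 2 * m) := mul_pos (hs.pos_of_mem hρ) (hs.sub_pos_of_mem hρ)
    have h := hs.flux_deriv_nonpos_of_isLocalMax hlt (hmax.isLocalMax (Ici_mem_nhds hlt))
    have hγp : ((4 * m ^ 2 / (ρ * (ρ - 2 * m)) + L) * a ρ
        - 2 * m / (ρ * (ρ - 2 * m)) * C) * (ρ * (ρ - 2 * m))
          = 4 * m ^ 2 * a ρ + L * (ρ * (ρ - 2 * m)) * a ρ - 2 * m * C := by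
      generalize ρ * (ρ - 2 * m) = p at hp ⊢
      field_simp
    have := mul_nonpos_of_nonpos_of_nonneg h hp.le
    rw [hγp] at this
    nlinarith [mul_nonneg (sq_nonneg m) haρ.le, mul_pos (mul_pos (by linarith : 0 < L) hp) haρ]

theorem eq_zero_of_one_le (hs : IsBartnikSolution m r₀ L C a a') (hL : 1 ≤ L)
    (hlim : Tendsto a atTop (𝓝 0)) : ∀ r ∈ Ici r₀, a r = 0 := by
  have hlim_neg : Tendsto (-a) atTop (𝓝 0) := by rw [← neg_zero]; exact hlim.neg
  wlog hmC : m * C ≤ 0 generalizing a a' C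
  · intro r hr
    simpa using this hs.neg hlim_neg (by simpa using hlim) (by linarith) r hr
  have hle := hs.nonpos_of_mul_nonpos hL hmC hlim
  have hge := hs.neg.nonpos_of_flux_nonneg
    (hs.neg.flux_nonneg_of_nonneg hL fun r hr => neg_nonneg.2 (hle r hr)) hlim_neg
  exact fun r hr => le_antisymm (hle r hr) (neg_nonpos.1 (hge r hr))

theorem mul_left_eq_zero_of_L_eq_zero (hs : IsBartnikSolution m r₀ 0 C a a')
    (hlim : Tendsto a atTop (𝓝 0)) : m * a r₀ = 0 := by
  have hu := tendsto_sub_div_self_atTop (2 * m)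
  have hlim' : Tendsto (fun r => 4 * m * a r - 2 * C) atTop
      (𝓝 (wronskianPlus m C a a' r₀ * 1 - wronskianMinus m C a a' r₀ * 1⁻¹)) := by
    refine ((hu.const_mul _).sub ((hu.inv₀ one_ne_zero).const_mul _)).congr' ?_
    filter_upwards [eventually_ge_atTop r₀] with r hr
    rw [four_mul_sub_eq (hs.pos_of_mem hr).ne' (hs.sub_pos_of_mem hr).ne',
      hs.wronskianPlus_eq_of_L_eq_zero r hr, hs.wronskianMinus_eq_of_L_eq_zero r hr, inv_div]
  have h := tendsto_nhds_unique ((hlim.const_mul (4 * m)).sub_const (2 * C)) hlim'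
  rw [hs.wronskianPlus_left, hs.wronskianMinus_left, hs.const_eq] at h
  linear_combination (-1 / 4 : ℝ) * h

theorem flux_eq_zero_of_L_eq_zero (hs : IsBartnikSolution m r₀ 0 C a a')
    (hlim : Tendsto a atTop (𝓝 0)) : ∀ r ∈ Ici r₀, r * (r - 2 * m) * a' r = 0 := by
  intro r hr
  have hr0 := (hs.pos_of_mem hr).ne'
  have hrm := (hs.sub_pos_of_mem hr).ne'
  have h := two_mul_flux_eq (a := a) (a' := a') (C := C) hr0 hrm
  rw [hs.wronskianPlus_eq_of_L_eq_zero r hr, hs.wronskianMinus_eq_of_L_eq_zero r hr,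
    hs.wronskianPlus_left, hs.wronskianMinus_left] at h
  have key : 2 * (r * (r - 2 * m) * a' r) * (r * (r - 2 * m))
      = m * a r₀ * (2 * r ^ 2 - 4 * r₀ * r + 4 * m * r₀) := by
    rw [h]
    field_simp
    ring
  rw [hs.mul_left_eq_zero_of_L_eq_zero hlim, zero_mul] at key
  simpa [hr0, hrm] using key

theorem eq_zero_of_L_eq_zero (hs : IsBartnikSolution m r₀ L C a a') (hL : L = 0)
    (hlim : Tendsto a atTop (𝓝 0)) : ∀ r ∈ Ici r₀, a r = 0 := by
  subst hL
  exact hs.eq_zero_of_flux_eq_zero (hs.flux_eq_zero_of_L_eq_zero hlim) hlim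

end IsBartnikSolution

theorem isBartnikSolution_of_contDiffOn {m r₀ L : ℝ} {a : ℝ → ℝ} (hr₀ : 2 * max 0 m < r₀)
    (ha : ContDiffOn ℝ 2 a (Ici r₀))
    (hode : ∀ r ∈ Ici r₀,
      derivWithin (fun s => s * (s - 2 * m) * derivWithin a (Ici r₀) s) (Ici r₀) r
        = (4 * m ^ 2 / (r * (r - 2 * m)) + L) * a r
          - (2 * m / (r * (r - 2 * m))) *
            ((4 * m - r₀) * a r₀ + r₀ * (r₀ - 2 * m) * derivWithin a (Ici r₀) r₀))
    (hinit : derivWithin a (Ici r₀) r₀ = (1 / (2 * (r₀ - 2 * m))) * (L - 2 * m / r₀) * a r₀) :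
    IsBartnikSolution m r₀ L ((4 * m - r₀) * a r₀ + r₀ * (r₀ - 2 * m) * derivWithin a (Ici r₀) r₀)
      a (derivWithin a (Ici r₀)) := by
  have h0 : 0 < r₀ := lt_of_le_of_lt (by positivity) hr₀
  have hm : 2 * m < r₀ := lt_of_le_of_lt (by gcongr; exact le_max_right 0 m) hr₀
  have hrm : r₀ - 2 * m ≠ 0 := by linarith
  have hflux : DifferentiableOn ℝ (fun s => s * (s - 2 * m) * derivWithin a (Ici r₀) s) (Ici r₀) :=
    (by fun_prop : Differentiable ℝ fun s : ℝ => s * (s - 2 * m)).differentiableOn.mul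
      ((ha.derivWithin (uniqueDiffOn_Ici r₀) (by norm_num)).differentiableOn one_ne_zero)
  have hleft : r₀ * (r₀ - 2 * m) * derivWithin a (Ici r₀) r₀ = (L * r₀ / 2 - m) * a r₀ := by
    rw [hinit]
    field_simp
  refine ⟨⟨h0, hm, fun r hr => ?_, fun r hr => ?_⟩, hleft, by rw [hleft]; ring⟩
  · exact ((ha.differentiableOn (by norm_num)) r hr).hasDerivWithinAt
  · exact hode r hr ▸ (hflux r hr).hasDerivWithinAt

theorem schwarzschild_radial_ode_decay_implies_zero_general
    (m r₀ : ℝ) (hr₀ : 2 * max 0 m < r₀) (ℓ : ℕ)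
    (a : ℝ → ℝ) (ha : ContDiffOn ℝ 2 a (Ici r₀))
    (hode : ∀ r ∈ Ici r₀,
      derivWithin (fun s => s * (s - 2 * m) * derivWithin a (Ici r₀) s) (Ici r₀) r
        = (4 * m ^ 2 / (r * (r - 2 * m)) + (ℓ : ℝ) * ((ℓ : ℝ) + 1)) * a r
          - (2 * m / (r * (r - 2 * m))) *
            ((4 * m - r₀) * a r₀ + r₀ * (r₀ - 2 * m) * derivWithin a (Ici r₀) r₀))
    (hinit : derivWithin a (Ici r₀) r₀
        = (1 / (2 * (r₀ - 2 * m))) * ((ℓ : ℝ) * ((ℓ : ℝ) + 1) - 2 * m / r₀) * a r₀)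
    (hlima : Tendsto a atTop (nhds 0)) :
    ∀ r ∈ Ici r₀, a r = 0 := by
  have hs := isBartnikSolution_of_contDiffOn hr₀ ha hode hinit
  rcases Nat.eq_zero_or_pos ℓ with rfl | hℓ
  · exact hs.eq_zero_of_L_eq_zero (by simp) hlima
  · have : (1 : ℝ) ≤ ℓ := by exact_mod_cast hℓ
    exact hs.eq_zero_of_one_le (by nlinarith) hlima

/-- A `C²` solution of the Schwarzschild radial ODE with parameters
`(m, r₀, ℓ)`, satisfying the Bartnik initial condition and decaying together with its
derivative at infinity, vanishes identically on `[r₀, ∞)`. -/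
theorem schwarzschild_radial_ode_decay_implies_zero
    (m r₀ : ℝ) (hr₀ : 2 * max 0 m < r₀) (ℓ : ℕ)
    (a : ℝ → ℝ) (ha : ContDiffOn ℝ 2 a (Ici r₀))
    (hode : ∀ r ∈ Ici r₀,
      derivWithin (fun s => s * (s - 2 * m) * derivWithin a (Ici r₀) s) (Ici r₀) r
        = (4 * m ^ 2 / (r * (r - 2 * m)) + (ℓ : ℝ) * ((ℓ : ℝ) + 1)) * a r
          - (2 * m / (r * (r - 2 * m))) *
            ((4 * m - r₀) * a r₀ + r₀ * (r₀ - 2 * m) * derivWithin a (Ici r₀) r₀))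
    (hinit : derivWithin a (Ici r₀) r₀
        = (1 / (2 * (r₀ - 2 * m))) * ((ℓ : ℝ) * ((ℓ : ℝ) + 1) - 2 * m / r₀) * a r₀)
    (hlima : Tendsto a atTop (nhds 0))
    (hlima' : Tendsto (derivWithin a (Ici r₀)) atTop (nhds 0)) :
    ∀ r ∈ Ici r₀, a r = 0 :=
  schwarzschild_radial_ode_decay_implies_zero_general m r₀ hr₀ ℓ a ha hode hinit hlima
end

section
/- Let r₀ > 0 and let ℓ ≥ 0 be an integer. Suppose a : [r₀,∞) → ℝ is twice continuously differentiable and satisfies (d/dr)(r²·a'(r)) = ℓ(ℓ+1)·a(r) for all r ≥ r₀, together with the initial condition a'(r₀) = (ℓ(ℓ+1)/(2r₀))·a(r₀), and a(r) → 0 as r → ∞. Then a(r) = 0 for all r ≥ r₀. -/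
open Set Filter

/-!
Multiply the equation `(r² a')' = λ a`, `λ = ℓ(ℓ+1) ≥ 0`, by `a`: the flux `E = r² a' a`
satisfies `E' = λ a² + r² a'² ≥ 0`, so `E` is nondecreasing. The initial condition makes
`E(r₀) = λ r₀ a(r₀)² / 2 ≥ 0`, hence `E ≥ 0`, i.e. `a a' ≥ 0`, and `a²` is nondecreasing.
A nondecreasing function tending to `0` is `≤ 0`, so `a² = 0`.
-/

theorem MonotoneOn.le_of_tendsto_atTop_s1 {α β : Type*} [TopologicalSpace α] [Preorder α]
    [OrderClosedTopology α] [Preorder β] [IsDirectedOrder β] {f : β → α} {b : β} {L : α}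
    (hf : MonotoneOn f (Ici b)) (hL : Tendsto f atTop (nhds L)) {x : β} (hx : x ∈ Ici b) :
    f x ≤ L :=
  haveI : Nonempty β := ⟨b⟩
  ge_of_tendsto hL <| (eventually_ge_atTop x).mono fun _ hy => hf hx (mem_Ici.2 (le_trans hx hy)) hy

section

variable {D : Set ℝ} {a a' p q : ℝ → ℝ}

theorem monotoneOn_of_forall_hasDerivWithinAt_nonneg (hD : Convex ℝ D)
    (ha : ∀ x ∈ D, HasDerivWithinAt a (a' x) D x) (ha' : ∀ x ∈ interior D, 0 ≤ a' x) :
    MonotoneOn a D :=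
  monotoneOn_of_hasDerivWithinAt_nonneg hD (fun x hx => (ha x hx).continuousWithinAt)
    (fun x hx => (ha x (interior_subset hx)).mono interior_subset) ha'

/-- For `(p a')' = q a` one has `(p a' a)' = q a² + p a'²`. -/
theorem monotoneOn_mul_deriv_mul_self (hD : Convex ℝ D)
    (ha : ∀ x ∈ D, HasDerivWithinAt a (a' x) D x)
    (hpa' : ∀ x ∈ D, HasDerivWithinAt (fun s => p s * a' s) (q x * a x) D x)
    (hp : ∀ x ∈ D, 0 ≤ p x) (hq : ∀ x ∈ D, 0 ≤ q x) :
    MonotoneOn (fun x => p x * a' x * a x) D := by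
  refine monotoneOn_of_forall_hasDerivWithinAt_nonneg hD (fun x hx => (hpa' x hx).mul (ha x hx))
    fun x hx => ?_
  have hx := interior_subset hx
  nlinarith [hp x hx, hq x hx, mul_self_nonneg (a x), mul_self_nonneg (a' x)]

theorem monotoneOn_sq_of_mul_deriv_nonneg (hD : Convex ℝ D)
    (ha : ∀ x ∈ D, HasDerivWithinAt a (a' x) D x) (h : ∀ x ∈ D, 0 ≤ a x * a' x) :
    MonotoneOn (fun x => a x ^ 2) D :=
  monotoneOn_of_forall_hasDerivWithinAt_nonneg hD (fun x hx => (ha x hx).pow 2) fun x hx => by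
    simpa [mul_assoc] using mul_nonneg zero_le_two (h x (interior_subset hx))

end

/-- The mass-zero case of the Schwarzschild radial ODE:
`(r² a')' = ℓ(ℓ+1) a` on `[r₀, ∞)` with `a'(r₀) = (ℓ(ℓ+1)/(2r₀)) a(r₀)` and
`a(r) → 0` at infinity forces `a ≡ 0`. -/
theorem schwarzschild_radial_ode_mass_zero_decay_implies_zero
    (r₀ : ℝ) (hr₀ : 0 < r₀) (ℓ : ℕ)
    (a : ℝ → ℝ) (ha : ContDiffOn ℝ 2 a (Ici r₀))
    (hode : ∀ r ∈ Ici r₀,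
      derivWithin (fun s => s ^ 2 * derivWithin a (Ici r₀) s) (Ici r₀) r
        = (ℓ : ℝ) * ((ℓ : ℝ) + 1) * a r)
    (hinit : derivWithin a (Ici r₀) r₀
        = ((ℓ : ℝ) * ((ℓ : ℝ) + 1) / (2 * r₀)) * a r₀)
    (hlima : Tendsto a atTop (nhds 0)) :
    ∀ r ∈ Ici r₀, a r = 0 := by
  set a' := derivWithin a (Ici r₀)
  have hderiv : ∀ r ∈ Ici r₀, HasDerivWithinAt a (a' r) (Ici r₀) r := fun r hr =>
    ((ha.differentiableOn two_ne_zero) r hr).hasDerivWithinAt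
  have hflux : ∀ r ∈ Ici r₀,
      HasDerivWithinAt (fun s => s ^ 2 * a' s) (ℓ * (ℓ + 1) * a r) (Ici r₀) r := fun r hr => by
    have ha' := (ha.derivWithin (uniqueDiffOn_Ici r₀) (by norm_num)).differentiableOn one_ne_zero
    rw [← hode r hr]
    exact (((differentiableOn_id.pow 2).mul ha') r hr).hasDerivWithinAt
  have hE := monotoneOn_mul_deriv_mul_self (convex_Ici r₀) hderiv hflux
    (fun r _ => sq_nonneg r) (fun _ _ => by positivity)
  have hE₀ : 0 ≤ r₀ ^ 2 * a' r₀ * a r₀ := by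
    rw [hinit, show r₀ ^ 2 * ((ℓ * (ℓ + 1) / (2 * r₀)) * a r₀) * a r₀
      = ℓ * (ℓ + 1) * r₀ / 2 * a r₀ ^ 2 by field_simp]
    positivity
  have hsq := monotoneOn_sq_of_mul_deriv_nonneg (convex_Ici r₀) hderiv fun r hr =>
    nonneg_of_mul_nonneg_right (by linarith [hE self_mem_Ici hr hr])
      (pow_pos (hr₀.trans_le hr) 2)
  have hlim : Tendsto (fun r => a r ^ 2) atTop (nhds 0) := by simpa using hlima.pow 2
  intro r hr
  exact pow_eq_zero_iff two_ne_zero |>.mp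
    (le_antisymm (hsq.le_of_tendsto_atTop_s1 hlim hr) (sq_nonneg _))
end

section
/- Let r₀ ≥ 0 and let h, p : [r₀,∞) → ℝ be continuous and strictly positive. Let B : [r₀,∞) → ℝ be differentiable, with r ↦ h(r)·B'(r) differentiable and (d/dr)(h(r)·B'(r)) = p(r)·B(r) for all r ≥ r₀. If B(r₀) ≥ 0 and B'(r₀) ≥ 0 with not both B(r₀) and B'(r₀) equal to zero, then B(r) > 0 and B'(r) > 0 for all r > r₀. -/
open Set

/-! With `G = h B'` the equation becomes the cooperative system `B' = h⁻¹ G`, `G' = p B`, whose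
coefficients are positive. Start from whichever of `B`, `G` is positive at `r₀`, say `u`, the other
being `v ≥ 0`. As long as `u > 0`, `v` is nondecreasing, hence nonnegative, so `u` is nondecreasing
too; `u` therefore cannot reach a first zero, and stays positive. Then `v' > 0` on `(r₀, ∞)`, so
`v` is strictly positive there as well. -/

theorem ContinuousOn.forall_Ici_pos_of_forall_Ico_pos {f : ℝ → ℝ} {a : ℝ}
    (hf : ContinuousOn f (Ici a)) (step : ∀ c ∈ Ici a, (∀ y ∈ Ico a c, 0 < f y) → 0 < f c) :
    ∀ x ∈ Ici a, 0 < f x := by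
  intro b hb
  by_contra! hfb
  have hclosed : IsClosed (Icc a b ∩ f ⁻¹' Iic 0) :=
    (hf.mono Icc_subset_Ici_self).preimage_isClosed_of_isClosed isClosed_Icc isClosed_Iic
  obtain ⟨c, ⟨⟨hac, hcb⟩, hfc⟩, hleast⟩ :=
    (isCompact_Icc.of_isClosed_subset hclosed inter_subset_left).exists_isLeast
      ⟨b, ⟨hb, le_rfl⟩, hfb⟩
  refine (step c hac fun y hy => ?_).not_ge hfc
  by_contra! hfy
  exact hy.2.not_ge (hleast ⟨⟨hy.1, hy.2.le.trans hcb⟩, hfy⟩)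

section Monotone

variable {f f' : ℝ → ℝ} {a b : ℝ}

theorem monotoneOn_Icc_of_hasDerivAt_nonneg (hf : ContinuousOn f (Icc a b))
    (hf' : ∀ x ∈ Ioo a b, HasDerivAt f (f' x) x) (hf'₀ : ∀ x ∈ Ioo a b, 0 ≤ f' x) :
    MonotoneOn f (Icc a b) :=
  monotoneOn_of_hasDerivWithinAt_nonneg (convex_Icc a b) hf
    (by simpa only [interior_Icc] using fun x hx => (hf' x hx).hasDerivWithinAt)
    (by simpa only [interior_Icc] using hf'₀)

theorem strictMonoOn_Icc_of_hasDerivAt_pos (hf : ContinuousOn f (Icc a b))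
    (hf' : ∀ x ∈ Ioo a b, HasDerivAt f (f' x) x) (hf'₀ : ∀ x ∈ Ioo a b, 0 < f' x) :
    StrictMonoOn f (Icc a b) :=
  strictMonoOn_of_hasDerivWithinAt_pos (convex_Icc a b) hf
    (by simpa only [interior_Icc] using fun x hx => (hf' x hx).hasDerivWithinAt)
    (by simpa only [interior_Icc] using hf'₀)

end Monotone

theorem DifferentiableOn.hasDerivAt_derivWithin_Ici {f : ℝ → ℝ} {a x : ℝ}
    (hf : DifferentiableOn ℝ f (Ici a)) (hx : a < x) :
    HasDerivAt f (derivWithin f (Ici a) x) x := by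
  rw [derivWithin_of_mem_nhds (Ici_mem_nhds hx)]
  exact (hf.differentiableAt (Ici_mem_nhds hx)).hasDerivAt

theorem forall_pos_of_hasDerivAt_cooperative {u v α β : ℝ → ℝ} {a : ℝ}
    (hu : ContinuousOn u (Ici a)) (hv : ContinuousOn v (Ici a))
    (hu' : ∀ x ∈ Ioi a, HasDerivAt u (α x * v x) x)
    (hv' : ∀ x ∈ Ioi a, HasDerivAt v (β x * u x) x)
    (hα : ∀ x ∈ Ioi a, 0 < α x) (hβ : ∀ x ∈ Ioi a, 0 < β x)
    (hua : 0 < u a) (hva : 0 ≤ v a) :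
    ∀ x ∈ Ioi a, 0 < u x ∧ 0 < v x := by
  have hu_pos : ∀ x ∈ Ici a, 0 < u x := by
    refine hu.forall_Ici_pos_of_forall_Ico_pos fun c hc hpos => ?_
    have hv_mono : MonotoneOn v (Icc a c) :=
      monotoneOn_Icc_of_hasDerivAt_nonneg (hv.mono Icc_subset_Ici_self)
        (fun x hx => hv' x hx.1) fun x hx => (mul_pos (hβ x hx.1) (hpos x ⟨hx.1.le, hx.2⟩)).le
    have hu_mono : MonotoneOn u (Icc a c) :=
      monotoneOn_Icc_of_hasDerivAt_nonneg (hu.mono Icc_subset_Ici_self)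
        (fun x hx => hu' x hx.1) fun x hx => mul_nonneg (hα x hx.1).le
          (hva.trans (hv_mono (left_mem_Icc.2 hc) (Ioo_subset_Icc_self hx) hx.1.le))
    exact hua.trans_le (hu_mono (left_mem_Icc.2 hc) (right_mem_Icc.2 hc) hc)
  intro x hx
  have hv_strict : StrictMonoOn v (Icc a x) :=
    strictMonoOn_Icc_of_hasDerivAt_pos (hv.mono Icc_subset_Ici_self)
      (fun y hy => hv' y hy.1) fun y hy => mul_pos (hβ y hy.1) (hu_pos y hy.1.le)
  exact ⟨hu_pos x (mem_Ici.2 hx.le),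
    hva.trans_lt (hv_strict (left_mem_Icc.2 hx.le) (right_mem_Icc.2 hx.le) hx)⟩

theorem sturm_liouville_positivity_general
    (r₀ : ℝ) (h p : ℝ → ℝ)
    (hh_pos : ∀ r ∈ Ici r₀, 0 < h r)
    (hp_pos : ∀ r ∈ Ici r₀, 0 < p r)
    (B : ℝ → ℝ) (hB : DifferentiableOn ℝ B (Ici r₀))
    (hhB' : DifferentiableOn ℝ (fun r => h r * derivWithin B (Ici r₀) r) (Ici r₀))
    (hode : ∀ r ∈ Ici r₀,
      derivWithin (fun s => h s * derivWithin B (Ici r₀) s) (Ici r₀) r = p r * B r)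
    (hB0 : 0 ≤ B r₀) (hB'0 : 0 ≤ derivWithin B (Ici r₀) r₀)
    (hnot : ¬ (B r₀ = 0 ∧ derivWithin B (Ici r₀) r₀ = 0)) :
    ∀ r, r₀ < r → 0 < B r ∧ 0 < derivWithin B (Ici r₀) r := by
  set G : ℝ → ℝ := fun r => h r * derivWithin B (Ici r₀) r with hG
  have hB' : ∀ x ∈ Ioi r₀, HasDerivAt B ((h x)⁻¹ * G x) x := fun x hx => by
    rw [hG, inv_mul_cancel_left₀ (hh_pos x (Ioi_subset_Ici_self hx)).ne']
    exact hB.hasDerivAt_derivWithin_Ici hx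
  have hG' : ∀ x ∈ Ioi r₀, HasDerivAt G (p x * B x) x := fun x hx =>
    hode x (Ioi_subset_Ici_self hx) ▸ hhB'.hasDerivAt_derivWithin_Ici hx
  have hh_inv_pos : ∀ x ∈ Ioi r₀, 0 < (h x)⁻¹ := fun x hx =>
    inv_pos.2 (hh_pos x (Ioi_subset_Ici_self hx))
  have hp_pos' : ∀ x ∈ Ioi r₀, 0 < p x := fun x hx => hp_pos x (Ioi_subset_Ici_self hx)
  have hG0 : 0 ≤ G r₀ := mul_nonneg (hh_pos r₀ self_mem_Ici).le hB'0
  have hpos : ∀ x ∈ Ioi r₀, 0 < B x ∧ 0 < G x := by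
    rcases hB0.lt_or_eq with hB0_pos | hB0_zero
    · exact forall_pos_of_hasDerivAt_cooperative hB.continuousOn hhB'.continuousOn
        hB' hG' hh_inv_pos hp_pos' hB0_pos hG0
    · have hG0_pos : 0 < G r₀ := mul_pos (hh_pos r₀ self_mem_Ici)
        (hB'0.lt_of_ne fun h0 => hnot ⟨hB0_zero.symm, h0.symm⟩)
      exact fun x hx => (forall_pos_of_hasDerivAt_cooperative hhB'.continuousOn
        hB.continuousOn hG' hB' hp_pos' hh_inv_pos hG0_pos hB0_zero.le x hx).symm
  intro r hr
  exact ⟨(hpos r hr).1, pos_of_mul_pos_right (hpos r hr).2 (hh_pos r (mem_Ici.2 hr.le)).le⟩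

/-- Sturm–Liouville comparison: if `(h B')' = p B` on `[r₀, ∞)` with `h, p`
continuous and positive, and `B(r₀) ≥ 0`, `B'(r₀) ≥ 0` not both zero, then `B > 0` and
`B' > 0` on `(r₀, ∞)`. -/
theorem sturm_liouville_positivity
    (r₀ : ℝ) (hr₀ : 0 ≤ r₀) (h p : ℝ → ℝ)
    (hh_cont : ContinuousOn h (Ici r₀)) (hh_pos : ∀ r ∈ Ici r₀, 0 < h r)
    (hp_cont : ContinuousOn p (Ici r₀)) (hp_pos : ∀ r ∈ Ici r₀, 0 < p r)
    (B : ℝ → ℝ) (hB : DifferentiableOn ℝ B (Ici r₀))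
    (hhB' : DifferentiableOn ℝ (fun r => h r * derivWithin B (Ici r₀) r) (Ici r₀))
    (hode : ∀ r ∈ Ici r₀,
      derivWithin (fun s => h s * derivWithin B (Ici r₀) s) (Ici r₀) r = p r * B r)
    (hB0 : 0 ≤ B r₀) (hB'0 : 0 ≤ derivWithin B (Ici r₀) r₀)
    (hnot : ¬ (B r₀ = 0 ∧ derivWithin B (Ici r₀) r₀ = 0)) :
    ∀ r, r₀ < r → 0 < B r ∧ 0 < derivWithin B (Ici r₀) r :=
  sturm_liouville_positivity_general r₀ h p hh_pos hp_pos B hB hhB' hode hB0 hB'0 hnot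
end

section
/- Let c < r₀ with r₀ > 0, and let p : [r₀,∞) → ℝ be continuous, strictly positive, and converging to a strictly positive constant as r → ∞. Let B : [r₀,∞) → ℝ be differentiable, with r ↦ r(r−c)·B'(r) differentiable and (d/dr)(r(r−c)·B'(r)) = p(r)·B(r) for all r ≥ r₀. If B(r) > 0 for all r ≥ r₀ and B is monotone increasing on [r₀,∞), then B(r) → +∞ as r → ∞. -/
/-!
Since `B` is increasing, `B ≥ B r₀ > 0`, and `p > L / 2` for large `r`, the flux
`w = r (r - c) B'` eventually has `w' = p B ≥ δ := L / 2 · B r₀ > 0`; so `w` grows at least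
linearly, hence `B' ≥ (δ / 2) / r` for large `r`, and `B` grows at least like `(δ / 2) log r`.
-/

open Set Filter

theorem exists_eventually_add_le_of_hasDerivAt_le {f g f' g' : ℝ → ℝ}
    (hf : ∀ᶠ x in atTop, HasDerivAt f (f' x) x) (hg : ∀ᶠ x in atTop, HasDerivAt g (g' x) x)
    (hle : ∀ᶠ x in atTop, g' x ≤ f' x) : ∃ C, ∀ᶠ x in atTop, g x + C ≤ f x := by
  obtain ⟨a, ha⟩ := eventually_atTop.1 (hf.and (hg.and hle))
  have hderiv : ∀ x ∈ Ici a, HasDerivAt (f - g) (f' x - g' x) x :=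
    fun x hx => (ha x hx).1.sub (ha x hx).2.1
  have hmono : MonotoneOn (f - g) (Ici a) := by
    refine monotoneOn_of_hasDerivWithinAt_nonneg (f' := f' - g') (convex_Ici a)
      (fun x hx => (hderiv x hx).continuousAt.continuousWithinAt) (fun x hx => ?_) (fun x hx => ?_)
    · exact (hderiv x (interior_subset hx)).hasDerivWithinAt
    · exact sub_nonneg.2 (ha x (interior_subset hx)).2.2
  refine ⟨f a - g a, (eventually_ge_atTop a).mono fun x hx => ?_⟩
  have := hmono self_mem_Ici hx hx
  simp only [Pi.sub_apply] at this
  linarith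

theorem tendsto_atTop_of_hasDerivAt_le {f g f' g' : ℝ → ℝ} (hg_top : Tendsto g atTop atTop)
    (hf : ∀ᶠ x in atTop, HasDerivAt f (f' x) x) (hg : ∀ᶠ x in atTop, HasDerivAt g (g' x) x)
    (hle : ∀ᶠ x in atTop, g' x ≤ f' x) : Tendsto f atTop atTop := by
  obtain ⟨C, hC⟩ := exists_eventually_add_le_of_hasDerivAt_le hf hg hle
  exact tendsto_atTop_mono' atTop hC (tendsto_atTop_add_const_right _ C hg_top)

theorem eventually_half_mul_inv_le_of_linear_le {u : ℝ → ℝ} {c δ C : ℝ} (hδ : 0 < δ)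
    (h : ∀ᶠ r in atTop, r * δ + C ≤ r * (r - c) * u r) :
    ∀ᶠ r in atTop, δ / 2 * r⁻¹ ≤ u r := by
  filter_upwards [h, eventually_gt_atTop 0, eventually_gt_atTop c,
    (tendsto_id.const_mul_atTop (half_pos hδ)).eventually_ge_atTop (-(C + δ * c / 2))]
    with r hCr hr hrc hlin
  have hpos : 0 < r * (r - c) := mul_pos hr (sub_pos.2 hrc)
  refine le_of_mul_le_mul_right ?_ hpos
  calc δ / 2 * r⁻¹ * (r * (r - c)) = δ / 2 * (r - c) := by field_simp
    _ ≤ r * δ + C := by simp only [id] at hlin; linarith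
    _ ≤ u r * (r * (r - c)) := by linarith

theorem DifferentiableOn.eventually_hasDerivAt_derivWithin_Ici {f : ℝ → ℝ} {a : ℝ}
    (hf : DifferentiableOn ℝ f (Ici a)) :
    ∀ᶠ x in atTop, HasDerivAt f (derivWithin f (Ici a) x) x :=
  (eventually_gt_atTop a).mono fun x hx =>
    (hf x hx.le).hasDerivWithinAt.hasDerivAt (Ici_mem_nhds hx)

theorem sturm_liouville_increasing_diverges_general
    (c r₀ : ℝ) (p : ℝ → ℝ)
    (L : ℝ) (hL : 0 < L) (hp_lim : Tendsto p atTop (nhds L))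
    (B : ℝ → ℝ) (hB : DifferentiableOn ℝ B (Ici r₀))
    (hhB' : DifferentiableOn ℝ
      (fun r => r * (r - c) * derivWithin B (Ici r₀) r) (Ici r₀))
    (hode : ∀ r ∈ Ici r₀,
      derivWithin (fun s => s * (s - c) * derivWithin B (Ici r₀) s) (Ici r₀) r
        = p r * B r)
    (hBpos : ∀ r ∈ Ici r₀, 0 < B r)
    (hmono : MonotoneOn B (Ici r₀)) :
    Tendsto B atTop atTop := by
  set B' := derivWithin B (Ici r₀)
  have hw : ∀ᶠ r in atTop, HasDerivAt (fun s => s * (s - c) * B' s) (p r * B r) r := by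
    filter_upwards [hhB'.eventually_hasDerivAt_derivWithin_Ici, eventually_ge_atTop r₀]
      with r hr hr₀
    rwa [hode r hr₀] at hr
  set δ := L / 2 * B r₀
  have hδ : 0 < δ := mul_pos (half_pos hL) (hBpos r₀ self_mem_Ici)
  have hforce : ∀ᶠ r in atTop, δ ≤ p r * B r := by
    filter_upwards [hp_lim.eventually (eventually_gt_nhds (half_lt_self hL)),
      eventually_ge_atTop r₀] with r hp hr
    exact mul_le_mul hp.le (hmono self_mem_Ici hr hr) (hBpos r₀ self_mem_Ici).le (by linarith)
  obtain ⟨C, hC⟩ := exists_eventually_add_le_of_hasDerivAt_le hw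
    (.of_forall fun r => hasDerivAt_mul_const δ) hforce
  exact tendsto_atTop_of_hasDerivAt_le (Real.tendsto_log_atTop.const_mul_atTop (half_pos hδ))
    hB.eventually_hasDerivAt_derivWithin_Ici
    ((eventually_gt_atTop 0).mono fun r hr => (Real.hasDerivAt_log hr.ne').const_mul (δ / 2))
    (eventually_half_mul_inv_le_of_linear_le hδ hC)

/-- For the ODE `(r(r−c) B')' = p B` on `[r₀, ∞)` with `c < r₀`, `r₀ > 0`,
`p` continuous positive converging to a positive constant, a positive increasing solution
`B` tends to `+∞`. -/
theorem sturm_liouville_increasing_diverges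
    (c r₀ : ℝ) (hc : c < r₀) (hr₀ : 0 < r₀) (p : ℝ → ℝ)
    (hp_cont : ContinuousOn p (Ici r₀)) (hp_pos : ∀ r ∈ Ici r₀, 0 < p r)
    (L : ℝ) (hL : 0 < L) (hp_lim : Tendsto p atTop (nhds L))
    (B : ℝ → ℝ) (hB : DifferentiableOn ℝ B (Ici r₀))
    (hhB' : DifferentiableOn ℝ
      (fun r => r * (r - c) * derivWithin B (Ici r₀) r) (Ici r₀))
    (hode : ∀ r ∈ Ici r₀,
      derivWithin (fun s => s * (s - c) * derivWithin B (Ici r₀) s) (Ici r₀) r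
        = p r * B r)
    (hBpos : ∀ r ∈ Ici r₀, 0 < B r)
    (hmono : MonotoneOn B (Ici r₀)) :
    Tendsto B atTop atTop :=
  sturm_liouville_increasing_diverges_general c r₀ p L hL hp_lim B hB hhB' hode hBpos hmono
end

section
/- Let c < r₀ with r₀ > 0, and let p : [r₀,∞) → ℝ be continuous, strictly positive, and converging to a strictly positive constant as r → ∞. Let B : [r₀,∞) → ℝ be differentiable, with r ↦ r(r−c)·B'(r) differentiable and (d/dr)(r(r−c)·B'(r)) = p(r)·B(r) for all r ≥ r₀. If B(r) > 0 for all r ≥ r₀ and B is monotone decreasing on [r₀,∞), then B(r) → 0 as r → ∞. -/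
/-!
A positive antitone `B` has a limit `m ≥ 0`, and `B' ≤ 0`, so the flux `r (r - c) B'` is
eventually nonpositive. If `m > 0`, then the ODE gives flux derivative `p B ≥ L m / 2`
eventually, so the flux grows at least linearly and becomes positive: a contradiction.
-/

open Set Filter Topology

theorem AntitoneOn.exists_tendsto_atTop_of_bddBelow {α β : Type*} [LinearOrder α]
    [ConditionallyCompleteLinearOrder β] [TopologicalSpace β] [OrderTopology β]
    {f : α → β} {a : α} (hf : AntitoneOn f (Ici a)) (hbdd : BddBelow (f '' Ici a)) :
    ∃ m, Tendsto f atTop (𝓝 m) ∧ ∀ x ∈ Ici a, m ≤ f x := by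
  have : Nonempty α := ⟨a⟩
  have hanti : Antitone fun x => f (max x a) := fun x y hxy =>
    hf (le_max_right x a) (le_max_right y a) (max_le_max hxy le_rfl)
  have hbdd' : BddBelow (range fun x => f (max x a)) :=
    hbdd.mono (range_subset_iff.2 fun x => mem_image_of_mem f (le_max_right x a))
  have hlim : Tendsto f atTop (𝓝 (⨅ x, f (max x a))) :=
    (tendsto_atTop_ciInf hanti hbdd').congr' <| by
      filter_upwards [eventually_ge_atTop a] with x hx
      rw [max_eq_left hx]
  refine ⟨_, hlim, fun x hx => le_of_tendsto hlim ?_⟩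
  filter_upwards [eventually_ge_atTop x] with y hy
  exact hf hx (le_trans hx hy) hy

theorem tendsto_atTop_of_le_deriv {g : ℝ → ℝ} {a C : ℝ} (hC : 0 < C)
    (hcont : ContinuousOn g (Ici a)) (hdiff : DifferentiableOn ℝ g (Ioi a))
    (hderiv : ∀ x ∈ Ioi a, C ≤ deriv g x) : Tendsto g atTop atTop := by
  rw [← interior_Ici] at hdiff hderiv
  have hlin : ∀ x ∈ Ici a, g a + C * (x - a) ≤ g x := fun x hx => by
    have := (convex_Ici a).mul_sub_le_image_sub_of_le_deriv hcont hdiff hderiv a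
      self_mem_Ici x hx hx
    linarith
  refine tendsto_atTop_mono' _ (eventually_atTop.2 ⟨a, hlin⟩) ?_
  exact tendsto_atTop_add_const_left _ _
    ((tendsto_atTop_add_const_right _ _ tendsto_id).const_mul_atTop hC)

theorem sturm_liouville_decreasing_tendsto_zero_general
    (c r₀ : ℝ) (p : ℝ → ℝ)
    (L : ℝ) (hL : 0 < L) (hp_lim : Tendsto p atTop (nhds L))
    (B : ℝ → ℝ)
    (hhB' : DifferentiableOn ℝ
      (fun r => r * (r - c) * derivWithin B (Ici r₀) r) (Ici r₀))
    (hode : ∀ r ∈ Ici r₀,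
      derivWithin (fun s => s * (s - c) * derivWithin B (Ici r₀) s) (Ici r₀) r
        = p r * B r)
    (hBpos : ∀ r ∈ Ici r₀, 0 < B r)
    (hanti : AntitoneOn B (Ici r₀)) :
    Tendsto B atTop (nhds 0) := by
  set g : ℝ → ℝ := fun r => r * (r - c) * derivWithin B (Ici r₀) r
  obtain ⟨m, hBm, hmB⟩ := hanti.exists_tendsto_atTop_of_bddBelow
    ⟨0, by rintro _ ⟨r, hr, rfl⟩; exact (hBpos r hr).le⟩
  have hm_nonneg : 0 ≤ m := ge_of_tendsto hBm <| by
    filter_upwards [eventually_ge_atTop r₀] with r hr using (hBpos r hr).le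
  obtain rfl | hm_pos := hm_nonneg.eq_or_lt
  · exact hBm
  have hg_nonpos : ∀ᶠ r in atTop, g r ≤ 0 := by
    filter_upwards [eventually_ge_atTop (max 0 c)] with r hr
    exact mul_nonpos_of_nonneg_of_nonpos
      (mul_nonneg (le_of_max_le_left hr) (sub_nonneg.2 (le_of_max_le_right hr)))
      hanti.derivWithin_nonpos
  obtain ⟨R, hR⟩ := eventually_atTop.1 (hp_lim.eventually (eventually_gt_nhds (half_lt_self hL)))
  set a := max R r₀
  have hr₀a : r₀ ≤ a := le_max_right R r₀
  have hdiff : DifferentiableOn ℝ g (Ioi a) := fun x hx =>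
    ((hhB' x (hr₀a.trans hx.le)).differentiableAt
      (Ici_mem_nhds (hr₀a.trans_lt hx))).differentiableWithinAt
  have hderiv : ∀ x ∈ Ioi a, L / 2 * m ≤ deriv g x := fun x hx => by
    have hpx : L / 2 < p x := hR x ((le_max_left R r₀).trans hx.le)
    rw [← derivWithin_of_mem_nhds (Ici_mem_nhds (hr₀a.trans_lt hx)), hode x (hr₀a.trans hx.le)]
    exact mul_le_mul hpx.le (hmB x (hr₀a.trans hx.le)) hm_pos.le (by linarith)
  have hg_top : Tendsto g atTop atTop := tendsto_atTop_of_le_deriv (by positivity)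
    (hhB'.continuousOn.mono (Ici_subset_Ici.2 hr₀a)) hdiff hderiv
  obtain ⟨r, hr_pos, hr_nonpos⟩ := ((hg_top.eventually_gt_atTop 0).and hg_nonpos).exists
  exact absurd hr_nonpos hr_pos.not_ge

/-- For the ODE `(r(r−c) B')' = p B` on `[r₀, ∞)` with `c < r₀`, `r₀ > 0`,
`p` continuous positive converging to a positive constant, a positive decreasing solution
`B` tends to `0`. -/
theorem sturm_liouville_decreasing_tendsto_zero
    (c r₀ : ℝ) (hc : c < r₀) (hr₀ : 0 < r₀) (p : ℝ → ℝ)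
    (hp_cont : ContinuousOn p (Ici r₀)) (hp_pos : ∀ r ∈ Ici r₀, 0 < p r)
    (L : ℝ) (hL : 0 < L) (hp_lim : Tendsto p atTop (nhds L))
    (B : ℝ → ℝ) (hB : DifferentiableOn ℝ B (Ici r₀))
    (hhB' : DifferentiableOn ℝ
      (fun r => r * (r - c) * derivWithin B (Ici r₀) r) (Ici r₀))
    (hode : ∀ r ∈ Ici r₀,
      derivWithin (fun s => s * (s - c) * derivWithin B (Ici r₀) s) (Ici r₀) r
        = p r * B r)
    (hBpos : ∀ r ∈ Ici r₀, 0 < B r)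
    (hanti : AntitoneOn B (Ici r₀)) :
    Tendsto B atTop (nhds 0) :=
  sturm_liouville_decreasing_tendsto_zero_general c r₀ p L hL hp_lim B hhB' hode hBpos hanti
end

section
/- Let m ∈ ℝ with m ≠ 0, m₀ := max{0, m}, r₀ > 2m₀, and a₀ ∈ ℝ. Suppose A : [r₀,∞) → ℝ is twice continuously differentiable and satisfies (d/dr)(r(r−2m)·A'(r)) = (4m²/(r(r−2m)))·A(r) for all r ≥ r₀, with initial values A(r₀) = (r₀/(2m) − 1/2)·a₀ and A'(r₀) = −(m/(r₀(r₀−2m)))·a₀. Then A(r) → (r₀/(2m) − 1/2)·a₀ as r → ∞. -/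
/-!
With `p = r(r−2m)` the equation reads `(pA')' = qA`, and it has the two explicit solutions
`r/(r−2m)` and `(r−2m)/r`, with fluxes `pu'` equal to `−2mr/(r−2m)` and `2m(r−2m)/r`.
By Abel's identity the Wronskians `p(A u' − A' u)` of `A` with each of them are
constant, and since the Wronskian of the two explicit solutions is `−4m ≠ 0`, `A` is the
combination of them whose coefficients are these constant Wronskians divided by `4m`.
Both explicit solutions tend to `1`, so `A` tends to the sum of the coefficients, which the
initial values determine.
-/

open Set Filter Topology

/-- `u` solves `(p u')' = q u` on `s`, `U = p u'` being its flux. -/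
def IsFluxSolution (p q u U : ℝ → ℝ) (s : Set ℝ) : Prop :=
  ∀ x ∈ s, ∃ u', HasDerivWithinAt u u' s x ∧ U x = p x * u' ∧ HasDerivWithinAt U (q x * u x) s x

/-- The Wronskian `p (f g' − f' g)` of two solutions, written through their fluxes. -/
def fluxWronskian (f F g G : ℝ → ℝ) (x : ℝ) : ℝ := f x * G x - F x * g x

theorem Convex.is_const_of_hasDerivWithinAt_zero {s : Set ℝ} {f : ℝ → ℝ} (hs : Convex ℝ s)
    (hf : ∀ x ∈ s, HasDerivWithinAt f 0 s x) {x y : ℝ} (hx : x ∈ s) (hy : y ∈ s) :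
    f x = f y := by
  have := hs.norm_image_sub_le_of_norm_hasDerivWithin_le hf (C := 0) (by simp) hy hx
  rwa [zero_mul, norm_le_zero_iff, sub_eq_zero] at this

theorem tendsto_sub_div_sub_atTop (a b : ℝ) :
    Tendsto (fun r : ℝ => (r - a) / (r - b)) atTop (𝓝 1) := by
  have h : Tendsto (fun r : ℝ => 1 + (b - a) / (r - b)) atTop (𝓝 (1 + 0)) :=
    tendsto_const_nhds.add <| tendsto_const_nhds.div_atTop <|
      tendsto_atTop_add_const_right _ _ tendsto_id
  rw [add_zero] at h
  refine h.congr' ?_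
  filter_upwards [eventually_ne_atTop b] with r hr
  field_simp [sub_ne_zero_of_ne hr]
  ring

section SturmLiouville

variable {p q f g F G : ℝ → ℝ} {s : Set ℝ}

theorem isFluxSolution_of_contDiffOn (hs : UniqueDiffOn ℝ s) (hp : DifferentiableOn ℝ p s)
    (hf : ContDiffOn ℝ 2 f s)
    (hode : ∀ x ∈ s, derivWithin (fun y => p y * derivWithin f s y) s x = q x * f x) :
    IsFluxSolution p q f (fun y => p y * derivWithin f s y) s := by
  intro x hx
  refine ⟨_, (hf.differentiableOn (by norm_num) x hx).hasDerivWithinAt, rfl, ?_⟩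
  rw [← hode x hx]
  have hf' := (hf.derivWithin hs (m := 1) (by norm_num)).differentiableOn (by norm_num)
  exact ((hp x hx).mul (hf' x hx)).hasDerivWithinAt

theorem IsFluxSolution.hasDerivWithinAt_fluxWronskian (hf : IsFluxSolution p q f F s)
    (hg : IsFluxSolution p q g G s) {x : ℝ} (hx : x ∈ s) :
    HasDerivWithinAt (fluxWronskian f F g G) 0 s x := by
  obtain ⟨f', hf', hFx, hF⟩ := hf x hx
  obtain ⟨g', hg', hGx, hG⟩ := hg x hx
  refine ((hf'.mul hG).sub (hF.mul hg')).congr_deriv ?_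
  rw [hFx, hGx]
  ring

theorem IsFluxSolution.fluxWronskian_eq (hs : Convex ℝ s) (hf : IsFluxSolution p q f F s)
    (hg : IsFluxSolution p q g G s) {x y : ℝ} (hx : x ∈ s) (hy : y ∈ s) :
    fluxWronskian f F g G x = fluxWronskian f F g G y :=
  hs.is_const_of_hasDerivWithinAt_zero (fun _ hz => hf.hasDerivWithinAt_fluxWronskian hg hz) hx hy

end SturmLiouville

noncomputable section Radial

variable (m : ℝ)

def radialWeight (r : ℝ) : ℝ := r * (r - 2 * m)

def radialPotential (r : ℝ) : ℝ := 4 * m ^ 2 / (r * (r - 2 * m))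

def radialSol₁ (r : ℝ) : ℝ := r / (r - 2 * m)

def radialFlux₁ (r : ℝ) : ℝ := -(2 * m) * r / (r - 2 * m)

def radialSol₂ (r : ℝ) : ℝ := (r - 2 * m) / r

def radialFlux₂ (r : ℝ) : ℝ := 2 * m * (r - 2 * m) / r

variable {m}

theorem radialWeight_pos {r : ℝ} (hr : 2 * max 0 m < r) : 0 < radialWeight m r := by
  have := le_max_left 0 m
  have := le_max_right 0 m
  unfold radialWeight
  apply mul_pos <;> linarith

variable {s : Set ℝ} (hs : ∀ r ∈ s, radialWeight m r ≠ 0)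
include hs

theorem isFluxSolution_radialSol₁ :
    IsFluxSolution (radialWeight m) (radialPotential m) (radialSol₁ m) (radialFlux₁ m) s := by
  intro r hr
  obtain ⟨h₀, h₂⟩ := mul_ne_zero_iff.mp (hs r hr)
  refine ⟨-(2 * m) / (r - 2 * m) ^ 2, ?_, ?_, ?_⟩
  · exact ((hasDerivAt_id' r).div ((hasDerivAt_id' r).sub_const (2 * m)) h₂).hasDerivWithinAt
      |>.congr_deriv (by ring)
  · simp only [radialFlux₁, radialWeight]
    field_simp
  · refine (((hasDerivAt_id' r).const_mul (-(2 * m))).div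
      ((hasDerivAt_id' r).sub_const (2 * m)) h₂).hasDerivWithinAt.congr_deriv ?_
    simp only [radialPotential, radialSol₁]
    field_simp
    ring

theorem isFluxSolution_radialSol₂ :
    IsFluxSolution (radialWeight m) (radialPotential m) (radialSol₂ m) (radialFlux₂ m) s := by
  intro r hr
  obtain ⟨h₀, h₂⟩ := mul_ne_zero_iff.mp (hs r hr)
  refine ⟨2 * m / r ^ 2, ?_, ?_, ?_⟩
  · exact (((hasDerivAt_id' r).sub_const (2 * m)).div (hasDerivAt_id' r) h₀).hasDerivWithinAt
      |>.congr_deriv (by ring)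
  · simp only [radialFlux₂, radialWeight]
    field_simp
  · refine ((((hasDerivAt_id' r).sub_const (2 * m)).const_mul (2 * m)).div
      (hasDerivAt_id' r) h₀).hasDerivWithinAt.congr_deriv ?_
    simp only [radialPotential, radialSol₂]
    field_simp
    ring

theorem IsFluxSolution.eq_fluxWronskian_radialSol (hconv : Convex ℝ s) (hm : m ≠ 0)
    {A F : ℝ → ℝ} (hA : IsFluxSolution (radialWeight m) (radialPotential m) A F s)
    {x₀ r : ℝ} (hx₀ : x₀ ∈ s) (hr : r ∈ s) :
    A r = (fluxWronskian A F (radialSol₂ m) (radialFlux₂ m) x₀ * radialSol₁ m r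
      - fluxWronskian A F (radialSol₁ m) (radialFlux₁ m) x₀ * radialSol₂ m r) / (4 * m) := by
  obtain ⟨h₀, h₂⟩ := mul_ne_zero_iff.mp (hs r hr)
  rw [hA.fluxWronskian_eq hconv (isFluxSolution_radialSol₁ hs) hx₀ hr,
    hA.fluxWronskian_eq hconv (isFluxSolution_radialSol₂ hs) hx₀ hr]
  simp only [fluxWronskian, radialSol₁, radialSol₂, radialFlux₁, radialFlux₂]
  field_simp
  ring

end Radial

/-- The `ℓ = 0` linearized radial equation
`(r(r−2m) A')' = (4m²/(r(r−2m))) A` with the stated initial values has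
`A(r) → (r₀/(2m) − 1/2) a₀` as `r → ∞`. -/
theorem ell_zero_radial_ode_limit
    (m r₀ a₀ : ℝ) (hm : m ≠ 0) (hr₀ : 2 * max 0 m < r₀)
    (A : ℝ → ℝ) (hA : ContDiffOn ℝ 2 A (Ici r₀))
    (hode : ∀ r ∈ Ici r₀,
      derivWithin (fun s => s * (s - 2 * m) * derivWithin A (Ici r₀) s) (Ici r₀) r
        = (4 * m ^ 2 / (r * (r - 2 * m))) * A r)
    (hA0 : A r₀ = (r₀ / (2 * m) - 1 / 2) * a₀)
    (hA'0 : derivWithin A (Ici r₀) r₀ = -(m / (r₀ * (r₀ - 2 * m))) * a₀) :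
    Tendsto A atTop (nhds ((r₀ / (2 * m) - 1 / 2) * a₀)) := by
  have hpos : ∀ r ∈ Ici r₀, 0 < radialWeight m r := fun r hr =>
    radialWeight_pos (lt_of_lt_of_le hr₀ hr)
  set F : ℝ → ℝ := fun y => radialWeight m y * derivWithin A (Ici r₀) y
  have hsol : IsFluxSolution (radialWeight m) (radialPotential m) A F (Ici r₀) :=
    isFluxSolution_of_contDiffOn (uniqueDiffOn_Ici r₀)
      (by unfold radialWeight; fun_prop) hA hode
  set c₁ := fluxWronskian A F (radialSol₁ m) (radialFlux₁ m) r₀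
  set c₂ := fluxWronskian A F (radialSol₂ m) (radialFlux₂ m) r₀
  have hlim : Tendsto (fun r => (c₂ * radialSol₁ m r - c₁ * radialSol₂ m r) / (4 * m)) atTop
      (𝓝 ((c₂ * 1 - c₁ * 1) / (4 * m))) :=
    ((((tendsto_sub_div_sub_atTop 0 (2 * m)).const_mul c₂).sub
      ((tendsto_sub_div_sub_atTop (2 * m) 0).const_mul c₁)).div_const (4 * m)).congr
      (fun r => by simp only [radialSol₁, radialSol₂, sub_zero])
  have hval : (c₂ * 1 - c₁ * 1) / (4 * m) = (r₀ / (2 * m) - 1 / 2) * a₀ := by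
    obtain ⟨h₀, h₂⟩ := mul_ne_zero_iff.mp (hpos r₀ self_mem_Ici).ne'
    simp only [c₁, c₂, fluxWronskian, radialSol₁, radialSol₂, radialFlux₁, radialFlux₂,
      F, radialWeight, hA0, hA'0]
    field_simp
    ring
  rw [← hval]
  refine hlim.congr' ?_
  filter_upwards [eventually_ge_atTop r₀] with r hr
  exact (hsol.eq_fluxWronskian_radialSol (fun r hr => (hpos r hr).ne') (convex_Ici r₀) hm
    self_mem_Ici hr).symm
end

section
/- Let m ∈ ℝ with m ≠ 0, m₀ := max{0, m}, and r₀ > 2m₀. Suppose a : [r₀,∞) → ℝ is twice continuously differentiable, solves the Schwarzschild radial ODE with parameters (m, r₀, ℓ) for ℓ = 1, satisfies the Bartnik initial condition, and a(r₀) ≠ 0. If a'(r) → 0 as r → ∞, then a(r) does not converge to any finite limit as r → ∞. -/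
open Set Filter Topology

/-!
For `ℓ = 1` the radial equation has a first integral. With `p = r (r - 2m)` one has
`(p'/p)' = -(4m²/p + 2)/p`, which cancels the potential of the equation, so
`a' + (p'/p)(a - 3A/2) - (3A/2m) log((r - 2m)/r)` is constant, where `A = a(r₀)`; the source
term of the equation is `-6m²A/p` once the Bartnik condition is used. The Bartnik condition
also makes the first two terms cancel at `r₀`, so the constant is
`-(3A/2m) log(1 - 2m/r₀) ≠ 0`.
If `a` converged and `a'` tended to `0`, the first integral would tend to `0` instead.
-/

theorem eq_of_hasDerivWithinAt_Ici_zero_of_tendsto {E : Type*} [NormedAddCommGroup E]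
    [NormedSpace ℝ E] {f : ℝ → E} {x₀ : ℝ} {L : E}
    (hf : ∀ x ∈ Ici x₀, HasDerivWithinAt f 0 (Ici x₀) x) (hL : Tendsto f atTop (𝓝 L)) :
    f x₀ = L := by
  have hconst : ∀ x ∈ Ici x₀, f x = f x₀ := fun x hx =>
    constant_of_has_deriv_right_zero
      (fun y hy => (hf y hy.1).continuousWithinAt.mono Icc_subset_Ici_self)
      (fun y hy => (hf y hy.1).mono (Ici_subset_Ici.mpr hy.1)) x ⟨hx, le_rfl⟩
  refine tendsto_nhds_unique (tendsto_const_nhds.congr' ?_) hL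
  filter_upwards [eventually_ge_atTop x₀] with x hx using (hconst x hx).symm

theorem derivWithin_mul_sub_mul {b : ℝ → ℝ} {s : Set ℝ} {c r : ℝ}
    (hs : UniqueDiffWithinAt ℝ s r) (hb : DifferentiableWithinAt ℝ b s r) :
    derivWithin (fun x => x * (x - c) * b x) s r
      = (2 * r - c) * b r + r * (r - c) * derivWithin b s r := by
  have hp : HasDerivWithinAt (fun x : ℝ => x * (x - c)) (2 * r - c) s r := by
    refine ((hasDerivAt_id' r).mul ((hasDerivAt_id' r).sub_const c)).hasDerivWithinAt
      |>.congr_deriv ?_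
    ring
  exact (hp.mul hb.hasDerivWithinAt).derivWithin hs

theorem tendsto_inv_add_inv_sub_atTop (c : ℝ) :
    Tendsto (fun r : ℝ => r⁻¹ + (r - c)⁻¹) atTop (𝓝 0) := by
  have h : Tendsto (fun r : ℝ => (r - c)⁻¹) atTop (𝓝 0) :=
    tendsto_inv_atTop_zero.comp (tendsto_atTop_add_const_right _ (-c) tendsto_id)
  simpa using tendsto_inv_atTop_zero.add h

theorem tendsto_log_sub_div_atTop (c : ℝ) :
    Tendsto (fun r : ℝ => Real.log ((r - c) / r)) atTop (𝓝 0) := by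
  have h : Tendsto (fun r : ℝ => 1 - c * r⁻¹) atTop (𝓝 1) := by
    simpa using tendsto_const_nhds (x := (1 : ℝ)).sub (tendsto_inv_atTop_zero.const_mul c)
  have hratio : Tendsto (fun r : ℝ => (r - c) / r) atTop (𝓝 1) := by
    refine h.congr' ?_
    filter_upwards [eventually_ne_atTop 0] with r hr
    field_simp
  simpa [Function.comp_def] using (Real.continuousAt_log one_ne_zero).tendsto.comp hratio

namespace Schwarzschild

noncomputable def firstIntegral (m A : ℝ) (a b : ℝ → ℝ) (r : ℝ) : ℝ :=
  b r + (r⁻¹ + (r - 2 * m)⁻¹) * (a r - 3 * A / 2)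
    - 3 * A / (2 * m) * Real.log ((r - 2 * m) / r)

variable {m A : ℝ} {a b : ℝ → ℝ}

theorem hasDerivWithinAt_firstIntegral {s : Set ℝ} {r b' : ℝ} (hm : m ≠ 0) (hr : 0 < r)
    (hr₂ : 0 < r - 2 * m) (ha : HasDerivWithinAt a (b r) s r) (hb : HasDerivWithinAt b b' s r)
    (hode : (2 * r - 2 * m) * b r + r * (r - 2 * m) * b'
      = (4 * m ^ 2 / (r * (r - 2 * m)) + 2) * a r - 2 * m / (r * (r - 2 * m)) * (3 * m * A)) :
    HasDerivWithinAt (firstIntegral m A a b) 0 s r := by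
  have hg : HasDerivAt (fun x : ℝ => x⁻¹ + (x - 2 * m)⁻¹)
      (-(r ^ 2)⁻¹ + -1 / (r - 2 * m) ^ 2) r :=
    (hasDerivAt_inv hr.ne').add (((hasDerivAt_id r).sub_const (2 * m)).inv hr₂.ne')
  have hlog : HasDerivAt (fun x : ℝ => Real.log ((x - 2 * m) / x))
      ((1 * r - (r - 2 * m) * 1) / r ^ 2 / ((r - 2 * m) / r)) r :=
    (((hasDerivAt_id r).sub_const (2 * m)).div (hasDerivAt_id r) hr.ne').log
      (div_ne_zero hr₂.ne' hr.ne')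
  have hb' : b' = ((4 * m ^ 2 / (r * (r - 2 * m)) + 2) * a r
      - 2 * m / (r * (r - 2 * m)) * (3 * m * A) - (2 * r - 2 * m) * b r) / (r * (r - 2 * m)) := by
    rw [eq_div_iff (mul_pos hr hr₂).ne']
    linarith
  refine ((hb.add (hg.hasDerivWithinAt.mul (ha.sub_const (3 * A / 2)))).sub
    (hlog.hasDerivWithinAt.const_mul (3 * A / (2 * m)))).congr_deriv ?_
  rw [hb']
  field_simp [hr₂.ne', show r - m * 2 ≠ 0 by linarith]
  ring

theorem tendsto_firstIntegral {L : ℝ} (ha : Tendsto a atTop (𝓝 L))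
    (hb : Tendsto b atTop (𝓝 0)) : Tendsto (firstIntegral m A a b) atTop (𝓝 0) := by
  have hg := tendsto_inv_add_inv_sub_atTop (2 * m)
  unfold firstIntegral
  simpa using (hb.add (hg.mul (ha.sub_const (3 * A / 2)))).sub
    ((tendsto_log_sub_div_atTop (2 * m)).const_mul (3 * A / (2 * m)))

theorem firstIntegral_of_bartnik {r₀ : ℝ} (hr₀ : 0 < r₀) (hr₀₂ : 0 < r₀ - 2 * m)
    (hinit : b r₀ = 1 / (2 * (r₀ - 2 * m)) * (2 - 2 * m / r₀) * a r₀) :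
    firstIntegral m (a r₀) a b r₀
      = -(3 * a r₀ / (2 * m)) * Real.log ((r₀ - 2 * m) / r₀) := by
  rw [firstIntegral, hinit]
  field_simp [hr₀₂.ne', show r₀ - m * 2 ≠ 0 by linarith]
  ring

end Schwarzschild

open Schwarzschild in
/-- For `m ≠ 0` and `ℓ = 1`, a `C²` solution of the Schwarzschild radial ODE
with the Bartnik initial condition and `a(r₀) ≠ 0` whose derivative tends to `0` cannot
converge to a finite limit. -/
theorem schwarzschild_radial_ode_ell_one_no_limit
    (m r₀ : ℝ) (hm : m ≠ 0) (hr₀ : 2 * max 0 m < r₀)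
    (a : ℝ → ℝ) (ha : ContDiffOn ℝ 2 a (Ici r₀))
    (hode : ∀ r ∈ Ici r₀,
      derivWithin (fun s => s * (s - 2 * m) * derivWithin a (Ici r₀) s) (Ici r₀) r
        = (4 * m ^ 2 / (r * (r - 2 * m)) + (1 : ℝ) * ((1 : ℝ) + 1)) * a r
          - (2 * m / (r * (r - 2 * m))) *
            ((4 * m - r₀) * a r₀ + r₀ * (r₀ - 2 * m) * derivWithin a (Ici r₀) r₀))
    (hinit : derivWithin a (Ici r₀) r₀
        = (1 / (2 * (r₀ - 2 * m))) * ((1 : ℝ) * ((1 : ℝ) + 1) - 2 * m / r₀) * a r₀)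
    (ha0 : a r₀ ≠ 0)
    (hlima' : Tendsto (derivWithin a (Ici r₀)) atTop (nhds 0)) :
    ¬ ∃ L : ℝ, Tendsto a atTop (nhds L) := by
  rintro ⟨L, hL⟩
  set b := derivWithin a (Ici r₀)
  have hr₀pos : 0 < r₀ := lt_of_le_of_lt (by positivity) hr₀
  have hr₀₂ : 0 < r₀ - 2 * m := by linarith [le_max_right 0 m]
  rw [show (1 : ℝ) * (1 + 1) = 2 by norm_num] at hinit hode
  have hsource : (4 * m - r₀) * a r₀ + r₀ * (r₀ - 2 * m) * b r₀ = 3 * m * a r₀ := by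
    rw [hinit]
    field_simp [hr₀₂.ne', show r₀ - m * 2 ≠ 0 by linarith]
    ring
  have hb : DifferentiableOn ℝ b (Ici r₀) :=
    (ha.derivWithin (uniqueDiffOn_Ici r₀) (by norm_num)).differentiableOn one_ne_zero
  have hderiv : ∀ r ∈ Ici r₀, HasDerivWithinAt (firstIntegral m (a r₀) a b) 0 (Ici r₀) r := by
    intro r hr
    refine hasDerivWithinAt_firstIntegral hm (by linarith [mem_Ici.mp hr])
      (by linarith [mem_Ici.mp hr]) ((ha.differentiableOn two_ne_zero r hr).hasDerivWithinAt)
      (hb r hr).hasDerivWithinAt ?_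
    rw [← derivWithin_mul_sub_mul (uniqueDiffOn_Ici r₀ r hr) (hb r hr), hode r hr, hsource]
  have hzero := eq_of_hasDerivWithinAt_Ici_zero_of_tendsto hderiv (tendsto_firstIntegral hL hlima')
  rw [firstIntegral_of_bartnik hr₀pos hr₀₂ hinit] at hzero
  have hlog : Real.log ((r₀ - 2 * m) / r₀) ≠ 0 :=
    Real.log_ne_zero_of_pos_of_ne_one (div_pos hr₀₂ hr₀pos) (by field_simp; grind)
  exact mul_ne_zero (by simp [ha0, hm]) hlog hzero
end

section
/- Let m ∈ ℝ, m₀ := max{0, m}, r₀ > 2m₀, and let ℓ ≥ 2 be an integer. Suppose B : [r₀,∞) → ℝ is twice continuously differentiable and satisfies (d/dr)(r(r−2m)·B'(r)) = (4m²/(r(r−2m)) + ℓ(ℓ+1))·B(r) for all r ≥ r₀. If B(r₀) ≥ 0 and 2(r₀−m)·B(r₀) + r₀(r₀−2m)·B'(r₀) > 0, then B(r) > 0 for all r > r₀ and B(r) → +∞ as r → ∞. -/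
open Set Filter

/-!
Put `f = r(r-2m)B` and `F = f'`. Since `(2(r-m))² = 4r(r-2m) + 4m²`, the equation turns into the
system `f' = F`, `r(r-2m) F' = 2(r-m) F + (ℓ(ℓ+1) - 2) f`, which keeps `f ≥ 0, F > 0` once
they hold at `r₀`. Then `(F / (r(r-2m)))' = (ℓ(ℓ+1) - 2) f / (r(r-2m))² ≥ 0`, so
`F ≥ K r(r-2m)` with `K > 0`, and integrating once more gives `f ≥ K (r - r₀) r(r-2m) / 3`,
that is `B(r) ≥ K (r - r₀) / 3`.
-/

section Cooperative

variable {a : ℝ}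

theorem monotoneOn_of_hasDerivWithinAt_Ici_nonneg {s : Set ℝ} (hs : Convex ℝ s) (hsa : s ⊆ Ici a)
    {f f' : ℝ → ℝ} (hf : ∀ x ∈ Ici a, HasDerivWithinAt f (f' x) (Ici a) x)
    (hf' : ∀ x ∈ interior s, 0 ≤ f' x) : MonotoneOn f s :=
  monotoneOn_of_hasDerivWithinAt_nonneg hs
    (fun x hx => (hf x (hsa hx)).continuousWithinAt.mono hsa)
    (fun x hx => ((hf x (hsa (interior_subset hx))).hasDerivAt
      (mem_of_superset (isOpen_interior.mem_nhds hx) (interior_subset.trans hsa))).hasDerivWithinAt)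
    hf'

theorem pos_of_hasDerivWithinAt_of_cooperative {u v w : ℝ → ℝ}
    (hu : ∀ x ∈ Ici a, HasDerivWithinAt u (v x) (Ici a) x)
    (hv : ∀ x ∈ Ici a, HasDerivWithinAt v (w x) (Ici a) x)
    (hw : ∀ x ∈ Ioi a, 0 ≤ u x → 0 ≤ v x → 0 ≤ w x) (hua : 0 ≤ u a) (hva : 0 < v a) :
    ∀ x ∈ Ici a, 0 < v x := by
  by_contra! hneg
  obtain ⟨b, hb, hvb⟩ := hneg
  set Z := Ici a ∩ v ⁻¹' Iic 0
  have hvc : ContinuousOn v (Ici a) := fun x hx => (hv x hx).continuousWithinAt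
  have hZ : IsClosed Z := hvc.preimage_isClosed_of_isClosed isClosed_Ici isClosed_Iic
  have hZbdd : BddBelow Z := ⟨a, fun x hx => hx.1⟩
  -- `c` is the first point where `v` fails to be positive
  set c := sInf Z
  have hcZ : c ∈ Z := hZ.csInf_mem ⟨b, hb, hvb⟩ hZbdd
  have hac : a < c := lt_of_le_of_ne hcZ.1 fun h => (h ▸ hcZ.2 : v a ≤ 0).not_gt hva
  have hv_pos : ∀ x ∈ Ioo a c, 0 < v x := fun x hx =>
    lt_of_not_ge fun hvx => hx.2.not_ge (csInf_le hZbdd ⟨hx.1.le, hvx⟩)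
  have hu_mono : MonotoneOn u (Icc a c) :=
    monotoneOn_of_hasDerivWithinAt_Ici_nonneg (convex_Icc a c) Icc_subset_Ici_self hu
      fun x hx => (hv_pos x (by rwa [interior_Icc] at hx)).le
  have hv_mono : MonotoneOn v (Icc a c) := by
    refine monotoneOn_of_hasDerivWithinAt_Ici_nonneg (convex_Icc a c) Icc_subset_Ici_self hv
      fun x hx => ?_
    rw [interior_Icc] at hx
    exact hw x hx.1 (hua.trans (hu_mono (left_mem_Icc.2 hac.le) (Ioo_subset_Icc_self hx) hx.1.le))
      (hv_pos x hx).le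
  exact (hva.trans_le (hv_mono (left_mem_Icc.2 hac.le) (right_mem_Icc.2 hac.le) hac.le)).not_ge
    hcZ.2

end Cooperative

section RadialODE

variable {m : ℝ}

theorem hasDerivAt_radial_weight (r : ℝ) :
    HasDerivAt (fun x => x * (x - 2 * m)) (2 * (r - m)) r :=
  ((hasDerivAt_id' r).mul ((hasDerivAt_id' r).sub_const _)).congr_deriv (by ring)

theorem HasDerivWithinAt.radial_mul {g : ℝ → ℝ} {g' r : ℝ} {s : Set ℝ}
    (hg : HasDerivWithinAt g g' s r) :
    HasDerivWithinAt (fun x => x * (x - 2 * m) * g x) (2 * (r - m) * g r + r * (r - 2 * m) * g')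
      s r :=
  (hasDerivAt_radial_weight r).hasDerivWithinAt.mul hg

theorem hasDerivWithinAt_radial_flux {c : ℝ} {B : ℝ → ℝ} {s : Set ℝ} (hs : UniqueDiffOn ℝ s)
    (hB : ContDiffOn ℝ 2 B s) {r : ℝ} (hr : r ∈ s) (hp : r * (r - 2 * m) ≠ 0)
    (hode : derivWithin (fun x => x * (x - 2 * m) * derivWithin B s x) s r
      = (4 * m ^ 2 / (r * (r - 2 * m)) + c) * B r) :
    HasDerivWithinAt (fun x => 2 * (x - m) * B x + x * (x - 2 * m) * derivWithin B s x)
      ((2 * (r - m) * (2 * (r - m) * B r + r * (r - 2 * m) * derivWithin B s r)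
        + (c - 2) * (r * (r - 2 * m) * B r)) / (r * (r - 2 * m))) s r := by
  have hB' : HasDerivWithinAt B (derivWithin B s r) s r :=
    ((hB.differentiableOn two_ne_zero) r hr).hasDerivWithinAt
  have hB'' : HasDerivWithinAt (derivWithin B s) (derivWithin (derivWithin B s) s r) s r :=
    (((hB.derivWithin hs (by norm_num : (1 : WithTop ℕ∞) + 1 ≤ 2)).differentiableOn
      one_ne_zero) r hr).hasDerivWithinAt
  have hflux := hB''.radial_mul (m := m)
  rw [hflux.derivWithin (hs r hr)] at hode
  rw [hode] at hflux
  have hlin : HasDerivWithinAt (fun x => 2 * (x - m)) 2 s r := by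
    simpa using (((hasDerivAt_id r).sub_const m).const_mul 2).hasDerivWithinAt
  refine ((hlin.mul hB').add hflux).congr_deriv ?_
  rw [eq_div_iff hp]
  linear_combination B r * div_mul_cancel₀ (4 * m ^ 2) hp

theorem radial_system_nonneg {a c : ℝ} {u v : ℝ → ℝ} (hma : 2 * m < a) (ha : 0 < a)
    (hc : 2 ≤ c) (hu : ∀ x ∈ Ici a, HasDerivWithinAt u (v x) (Ici a) x)
    (hv : ∀ x ∈ Ici a, HasDerivWithinAt v
      ((2 * (x - m) * v x + (c - 2) * u x) / (x * (x - 2 * m))) (Ici a) x)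
    (hua : 0 ≤ u a) (hva : 0 < v a) :
    ∀ x ∈ Ici a, 0 ≤ u x ∧ 0 < v x := by
  have hv_pos : ∀ x ∈ Ici a, 0 < v x := by
    refine pos_of_hasDerivWithinAt_of_cooperative hu hv (fun x hx hux hvx => ?_) hua hva
    have hxm : 0 ≤ x - m := by linarith [mem_Ioi.1 hx]
    have hp : 0 < x * (x - 2 * m) :=
      mul_pos (by linarith [mem_Ioi.1 hx]) (by linarith [mem_Ioi.1 hx])
    have hc2 : 0 ≤ c - 2 := by linarith
    positivity
  have hu_mono : MonotoneOn u (Ici a) :=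
    monotoneOn_of_hasDerivWithinAt_Ici_nonneg (convex_Ici a) subset_rfl hu
      fun x hx => (hv_pos x (interior_subset hx)).le
  exact fun x hx => ⟨hua.trans (hu_mono self_mem_Ici hx hx), hv_pos x hx⟩

theorem exists_pos_mul_le_of_radial_system {a c : ℝ} {u v : ℝ → ℝ} (hma : 2 * m < a) (ha : 0 < a)
    (hc : 2 ≤ c) (hu : ∀ x ∈ Ici a, HasDerivWithinAt u (v x) (Ici a) x)
    (hv : ∀ x ∈ Ici a, HasDerivWithinAt v
      ((2 * (x - m) * v x + (c - 2) * u x) / (x * (x - 2 * m))) (Ici a) x)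
    (hua : 0 ≤ u a) (hva : 0 < v a) :
    ∃ K > 0, ∀ x ∈ Ici a, K * (x * (x - 2 * m) * (x - a)) ≤ u x := by
  have hp : ∀ x ∈ Ici a, 0 < x * (x - 2 * m) := fun x hx =>
    mul_pos (by linarith [mem_Ici.1 hx]) (by linarith [mem_Ici.1 hx])
  have huv := radial_system_nonneg hma ha hc hu hv hua hva
  have hφ : MonotoneOn (fun x => v x / (x * (x - 2 * m))) (Ici a) := by
    refine monotoneOn_of_hasDerivWithinAt_Ici_nonneg (convex_Ici a) subset_rfl
      (fun x hx => (hv x hx).div (hasDerivAt_radial_weight x).hasDerivWithinAt (hp x hx).ne')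
      fun x hx => ?_
    have hx : x ∈ Ici a := interior_subset hx
    rw [div_mul_cancel₀ _ (hp x hx).ne']
    refine div_nonneg ?_ (sq_nonneg _)
    linarith [mul_nonneg (sub_nonneg.2 hc) (huv x hx).1]
  set K := v a / (a * (a - 2 * m))
  have hK : 0 < K := div_pos hva (hp a self_mem_Ici)
  have hKv : ∀ x ∈ Ici a, K * (x * (x - 2 * m)) ≤ v x := fun x hx =>
    (le_div_iff₀ (hp x hx)).1 (hφ self_mem_Ici hx hx)
  refine ⟨K / 3, by positivity, fun x hx => ?_⟩
  have hw : MonotoneOn (fun x => u x - K / 3 * (x * (x - 2 * m) * (x - a))) (Ici a) := by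
    refine monotoneOn_of_hasDerivWithinAt_Ici_nonneg (convex_Ici a) subset_rfl
      (fun x hx => (hu x hx).sub ((((hasDerivAt_id' x).sub_const a).hasDerivWithinAt.radial_mul
        (m := m)).const_mul (K / 3))) fun x hx => ?_
    have hx : a ≤ x := interior_subset hx
    -- `K p - K/3 (p + 2(x-m)(x-a)) = 2K/3 ((x-a)(a-m) + a(a-2m))` with `p = x(x-2m)`
    have hgap : 0 ≤ K * ((x - a) * (a - m) + a * (a - 2 * m)) := by
      have : 0 ≤ x - a := by linarith
      have : 0 ≤ a - m := by linarith
      have : 0 < a - 2 * m := by linarith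
      positivity
    linarith [hKv x hx]
  have h := hw self_mem_Ici hx hx
  simp only [sub_self, mul_zero, sub_zero] at h
  linarith

end RadialODE

/-- For `ℓ ≥ 2`, a `C²` solution of the homogeneous radial equation
`(r(r−2m) B')' = (4m²/(r(r−2m)) + ℓ(ℓ+1)) B` with `B(r₀) ≥ 0` and
`f'(r₀) = 2(r₀−m) B(r₀) + r₀(r₀−2m) B'(r₀) > 0` is positive on `(r₀, ∞)` and tends
to `+∞`. -/
theorem homogeneous_radial_ode_positive_and_diverges
    (m r₀ : ℝ) (hr₀ : 2 * max 0 m < r₀) (ℓ : ℕ) (hℓ : 2 ≤ ℓ)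
    (B : ℝ → ℝ) (hB : ContDiffOn ℝ 2 B (Ici r₀))
    (hode : ∀ r ∈ Ici r₀,
      derivWithin (fun s => s * (s - 2 * m) * derivWithin B (Ici r₀) s) (Ici r₀) r
        = (4 * m ^ 2 / (r * (r - 2 * m)) + (ℓ : ℝ) * ((ℓ : ℝ) + 1)) * B r)
    (hB0 : 0 ≤ B r₀)
    (hf'0 : 0 < 2 * (r₀ - m) * B r₀ + r₀ * (r₀ - 2 * m) * derivWithin B (Ici r₀) r₀) :
    (∀ r, r₀ < r → 0 < B r) ∧ Tendsto B atTop atTop := by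
  have hr₀m : 2 * m < r₀ := by linarith [le_max_right 0 m]
  have hr₀pos : 0 < r₀ := by linarith [le_max_left 0 m]
  have hc : (2 : ℝ) ≤ ℓ * (ℓ + 1) := by
    have : (2 : ℝ) ≤ ℓ := by exact_mod_cast hℓ
    nlinarith
  have hp : ∀ r ∈ Ici r₀, 0 < r * (r - 2 * m) := fun r hr =>
    mul_pos (by linarith [mem_Ici.1 hr]) (by linarith [mem_Ici.1 hr])
  obtain ⟨K, hK, hKB⟩ := exists_pos_mul_le_of_radial_system hr₀m hr₀pos hc
    (fun r hr => ((hB.differentiableOn two_ne_zero) r hr).hasDerivWithinAt.radial_mul)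
    (fun r hr => hasDerivWithinAt_radial_flux (uniqueDiffOn_Ici r₀) hB hr (hp r hr).ne' (hode r hr))
    (mul_nonneg (hp r₀ self_mem_Ici).le hB0) hf'0
  have hB_ge : ∀ r ∈ Ici r₀, K * (r - r₀) ≤ B r := fun r hr =>
    le_of_mul_le_mul_left (by linarith [hKB r hr]) (hp r hr)
  refine ⟨fun r hr => (mul_pos hK (sub_pos.2 hr)).trans_le (hB_ge r hr.le), ?_⟩
  refine tendsto_atTop_mono' _ ((eventually_ge_atTop r₀).mono hB_ge) ?_
  exact (tendsto_atTop_add_const_right _ (-r₀) tendsto_id).const_mul_atTop hK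
end

section
/- Let m ∈ ℝ, m₀ := max{0, m}, r₀ > 2m₀, and let ℓ ≥ 0 be an integer. Suppose a : [r₀,∞) → ℝ is twice continuously differentiable, solves the Schwarzschild radial ODE with parameters (m, r₀, ℓ), satisfies the Bartnik initial condition, and a(r₀) = 0. Then a(r) = 0 for all r ≥ r₀. -/
open Set

/-!
With `a(r₀) = 0` the Bartnik condition gives `a'(r₀) = 0`, so the inhomogeneous term of the
ODE vanishes and `a` solves the Sturm–Liouville equation `(p a')' = q a` with
`p = r (r - 2m) > 0` and `q` continuous on `[r₀, ∞)`. The pair `(a, p a')` then solves a linear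
first-order system whose coefficients `1/p` and `q` are bounded on every `[r₀, r]`, and
Grönwall's inequality forces it to vanish.
-/

theorem norm_prodMk_mul_swap_le {K α β x y : ℝ} (hα : ‖α‖ ≤ K) (hβ : ‖β‖ ≤ K) :
    ‖(α * y, β * x)‖ ≤ K * ‖(x, y)‖ := by
  have hK : 0 ≤ K := (norm_nonneg α).trans hα
  simp only [Prod.norm_def, norm_mul, mul_max_of_nonneg _ _ hK]
  exact max_le ((mul_le_mul_of_nonneg_right hα (norm_nonneg y)).trans (le_max_right _ _))
    ((mul_le_mul_of_nonneg_right hβ (norm_nonneg x)).trans (le_max_left _ _))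

theorem sturmLiouville_eq_zero_of_initial_eq_zero {p q a a' : ℝ → ℝ} {r₀ : ℝ}
    (hp : ContinuousOn p (Ici r₀)) (hp_pos : ∀ r ∈ Ici r₀, 0 < p r)
    (hq : ContinuousOn q (Ici r₀))
    (ha : ∀ r ∈ Ici r₀, HasDerivWithinAt a (a' r) (Ici r₀) r)
    (hpa' : ∀ r ∈ Ici r₀, HasDerivWithinAt (fun s => p s * a' s) (q r * a r) (Ici r₀) r)
    (ha₀ : a r₀ = 0) (ha'₀ : a' r₀ = 0) :
    ∀ r ∈ Ici r₀, a r = 0 := by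
  intro r hr
  obtain ⟨C₁, hC₁⟩ := isCompact_Icc.exists_bound_of_continuousOn
    ((hp.inv₀ fun s hs => (hp_pos s hs).ne').mono (Icc_subset_Ici_self : Icc r₀ r ⊆ _))
  obtain ⟨C₂, hC₂⟩ := isCompact_Icc.exists_bound_of_continuousOn
    (hq.mono (Icc_subset_Ici_self : Icc r₀ r ⊆ _))
  let f : ℝ → ℝ × ℝ := fun s => (a s, p s * a' s)
  have hf : ContinuousOn f (Icc r₀ r) :=
    (ContinuousOn.prodMk (fun s hs => (ha s hs).continuousWithinAt)
      (fun s hs => (hpa' s hs).continuousWithinAt)).mono Icc_subset_Ici_self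
  have hf' : ∀ s ∈ Ico r₀ r,
      HasDerivWithinAt f ((p s)⁻¹ * (p s * a' s), q s * a s) (Ici s) s := by
    intro s hs
    have hs' : s ∈ Ici r₀ := hs.1
    rw [inv_mul_cancel_left₀ (hp_pos s hs').ne']
    exact ((ha s hs').prodMk (hpa' s hs')).mono (Ici_subset_Ici.mpr hs.1)
  have hbound : ∀ s ∈ Ico r₀ r,
      ‖((p s)⁻¹ * (p s * a' s), q s * a s)‖ ≤ max C₁ C₂ * ‖f s‖ :=
    fun s hs => norm_prodMk_mul_swap_le
      ((hC₁ s (Ico_subset_Icc_self hs)).trans (le_max_left _ _))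
      ((hC₂ s (Ico_subset_Icc_self hs)).trans (le_max_right _ _))
  have hf₀ : f r₀ = 0 := by simp [f, ha₀, ha'₀]
  exact congrArg Prod.fst
    (eq_zero_of_abs_deriv_le_mul_abs_self_of_eq_zero_right hf hf' hf₀ hbound r ⟨hr, le_rfl⟩)

/-- A `C²` solution of the Schwarzschild radial ODE with the Bartnik
initial condition and `a(r₀) = 0` vanishes identically. -/
theorem schwarzschild_radial_ode_zero_initial_value
    (m r₀ : ℝ) (hr₀ : 2 * max 0 m < r₀) (ℓ : ℕ)
    (a : ℝ → ℝ) (ha : ContDiffOn ℝ 2 a (Ici r₀))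
    (hode : ∀ r ∈ Ici r₀,
      derivWithin (fun s => s * (s - 2 * m) * derivWithin a (Ici r₀) s) (Ici r₀) r
        = (4 * m ^ 2 / (r * (r - 2 * m)) + (ℓ : ℝ) * ((ℓ : ℝ) + 1)) * a r
          - (2 * m / (r * (r - 2 * m))) *
            ((4 * m - r₀) * a r₀ + r₀ * (r₀ - 2 * m) * derivWithin a (Ici r₀) r₀))
    (hinit : derivWithin a (Ici r₀) r₀
        = (1 / (2 * (r₀ - 2 * m))) * ((ℓ : ℝ) * ((ℓ : ℝ) + 1) - 2 * m / r₀) * a r₀)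
    (ha0 : a r₀ = 0) :
    ∀ r ∈ Ici r₀, a r = 0 := by
  have hp_pos : ∀ r ∈ Ici r₀, 0 < r * (r - 2 * m) := fun r (hr : r₀ ≤ r) =>
    mul_pos (by linarith [le_max_left 0 m]) (by linarith [le_max_right 0 m])
  have hp : Differentiable ℝ fun r : ℝ => r * (r - 2 * m) := by fun_prop
  have ha'₀ : derivWithin a (Ici r₀) r₀ = 0 := by rw [hinit, ha0, mul_zero]
  have hpa'_diff : DifferentiableOn ℝ (fun s => s * (s - 2 * m) * derivWithin a (Ici r₀) s)
      (Ici r₀) :=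
    hp.differentiableOn.mul
      ((ha.derivWithin (uniqueDiffOn_Ici r₀) le_rfl).differentiableOn one_ne_zero)
  refine sturmLiouville_eq_zero_of_initial_eq_zero hp.continuous.continuousOn hp_pos
    (q := fun r => 4 * m ^ 2 / (r * (r - 2 * m)) + (ℓ : ℝ) * ((ℓ : ℝ) + 1))
    ((continuousOn_const.div hp.continuous.continuousOn fun r hr => (hp_pos r hr).ne').add
      continuousOn_const)
    (fun r hr => ((ha.differentiableOn two_ne_zero) r hr).hasDerivWithinAt)
    (fun r hr => ?_) ha0 ha'₀
  have h := (hpa'_diff r hr).hasDerivWithinAt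
  rwa [hode r hr, ha0, ha'₀, mul_zero, mul_zero, add_zero, mul_zero, sub_zero] at h
end

section
/- Let m ∈ ℝ, m₀ := max{0, m}, r₀ > 2m₀, and let ℓ ≥ 0 be an integer with ℓ ≠ 1. Suppose a : [r₀,∞) → ℝ is twice continuously differentiable and solves the Schwarzschild radial ODE with parameters (m, r₀, ℓ). Define β₀ := (2m/(ℓ(ℓ+1)−2))·((4m−r₀)·a(r₀) + r₀(r₀−2m)·a'(r₀)) and B(r) := a(r) − β₀/(r(r−2m)). Then (d/dr)(r(r−2m)·B'(r)) = (4m²/(r(r−2m)) + ℓ(ℓ+1))·B(r) for all r ≥ r₀. -/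
/-!
The correction `u(r) = 1/(r(r-2m))` satisfies `(r(r-2m) u')' = (4m²/(r(r-2m)) + 2) u`, because
`(2r-2m)² = 4 r(r-2m) + 4m²`. Applied to `u`, the radial operator
`L[f] = (r(r-2m) f')' - (4m²/(r(r-2m)) + ℓ(ℓ+1)) f` therefore gives `(2 - ℓ(ℓ+1)) u`, so by
linearity `L[a - β₀ u] = L[a] - β₀ (2 - ℓ(ℓ+1)) u`, and `β₀` is chosen exactly so that this
cancels the source term of the inhomogeneous equation.
-/

open Set

theorem derivWithin_mul_derivWithin_sub_const_mul {S : Set ℝ} {p f g : ℝ → ℝ} {r : ℝ}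
    (hr : r ∈ S) (hf : DifferentiableOn ℝ f S) (hg : DifferentiableOn ℝ g S)
    (hfluxf : DifferentiableWithinAt ℝ (fun s => p s * derivWithin f S s) S r)
    (hfluxg : DifferentiableWithinAt ℝ (fun s => p s * derivWithin g S s) S r) (c : ℝ) :
    derivWithin (fun s => p s * derivWithin (fun t => f t - c * g t) S s) S r
      = derivWithin (fun s => p s * derivWithin f S s) S r
        - c * derivWithin (fun s => p s * derivWithin g S s) S r := by
  have hflux : EqOn (fun s => p s * derivWithin (fun t => f t - c * g t) S s)
      (fun s => p s * derivWithin f S s - c * (p s * derivWithin g S s)) S := by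
    intro s hs
    dsimp only
    rw [derivWithin_fun_sub (hf s hs) ((hg s hs).const_mul c),
      derivWithin_const_mul c (hg s hs)]
    ring
  rw [derivWithin_congr hflux (hflux hr), derivWithin_fun_sub hfluxf (hfluxg.const_mul c),
    derivWithin_const_mul c hfluxg]

theorem hasDerivAt_mul_sub (m r : ℝ) :
    HasDerivAt (fun s => s * (s - 2 * m)) (2 * r - 2 * m) r :=
  ((hasDerivAt_id' r).fun_mul ((hasDerivAt_id' r).sub_const (2 * m))).congr_deriv (by ring)

section Correction

variable {m r : ℝ}

theorem hasDerivAt_inv_mul_sub (hr : r * (r - 2 * m) ≠ 0) :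
    HasDerivAt (fun s => (s * (s - 2 * m))⁻¹) (-(2 * r - 2 * m) / (r * (r - 2 * m)) ^ 2) r :=
  (hasDerivAt_mul_sub m r).inv hr

theorem hasDerivAt_neg_sub_div_mul_sub (hr : r * (r - 2 * m) ≠ 0) :
    HasDerivAt (fun s => -(2 * s - 2 * m) / (s * (s - 2 * m)))
      ((4 * m ^ 2 / (r * (r - 2 * m)) + 2) * (r * (r - 2 * m))⁻¹) r := by
  have hnum : HasDerivAt (fun s => -(2 * s - 2 * m)) (-2) r :=
    (((hasDerivAt_id' r).const_mul 2).sub_const (2 * m)).fun_neg.congr_deriv (by ring)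
  refine (hnum.fun_div (hasDerivAt_mul_sub m r) hr).congr_deriv ?_
  obtain ⟨hr0, hrm⟩ := mul_ne_zero_iff.mp hr
  field_simp
  ring

theorem hasDerivWithinAt_mul_derivWithin_inv_mul_sub {S : Set ℝ} (hS : UniqueDiffOn ℝ S)
    (hS0 : ∀ s ∈ S, s * (s - 2 * m) ≠ 0) (hr : r ∈ S) :
    HasDerivWithinAt
      (fun s => s * (s - 2 * m) * derivWithin (fun t => (t * (t - 2 * m))⁻¹) S s)
      ((4 * m ^ 2 / (r * (r - 2 * m)) + 2) * (r * (r - 2 * m))⁻¹) S r := by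
  have hflux : EqOn (fun s => s * (s - 2 * m) * derivWithin (fun t => (t * (t - 2 * m))⁻¹) S s)
      (fun s => -(2 * s - 2 * m) / (s * (s - 2 * m))) S := by
    intro s hs
    have hs0 := hS0 s hs
    simp only [(hasDerivAt_inv_mul_sub hs0).hasDerivWithinAt.derivWithin (hS s hs)]
    field_simp
  exact (hasDerivAt_neg_sub_div_mul_sub (hS0 r hr)).hasDerivWithinAt.congr hflux (hflux hr)

end Correction

theorem mul_sub_two_mul_pos {m r₀ r : ℝ} (hr₀ : 2 * max 0 m < r₀) (hr : r₀ ≤ r) :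
    0 < r * (r - 2 * m) := by
  have hr0 : 0 < r := by linarith [le_max_left 0 m]
  have hrm : 0 < r - 2 * m := by linarith [le_max_right 0 m]
  positivity

theorem natCast_mul_add_one_sub_two_ne_zero {ℓ : ℕ} (hℓ : ℓ ≠ 1) :
    (ℓ : ℝ) * ((ℓ : ℝ) + 1) - 2 ≠ 0 := by
  have hfactor : (ℓ : ℝ) * ((ℓ : ℝ) + 1) - 2 = ((ℓ : ℝ) - 1) * ((ℓ : ℝ) + 2) := by ring
  have hℓ' : (ℓ : ℝ) - 1 ≠ 0 := sub_ne_zero.mpr (by exact_mod_cast hℓ)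
  rw [hfactor]
  exact mul_ne_zero hℓ' (by positivity)

/-- For `ℓ ≠ 1`, subtracting the particular solution `β₀/(r(r−2m))` from a
solution `a` of the inhomogeneous Schwarzschild radial ODE yields a solution `B` of the
homogeneous equation `(r(r−2m) B')' = (4m²/(r(r−2m)) + ℓ(ℓ+1)) B`. -/
theorem schwarzschild_radial_ode_homogenization
    (m r₀ : ℝ) (hr₀ : 2 * max 0 m < r₀) (ℓ : ℕ) (hℓ : ℓ ≠ 1)
    (a : ℝ → ℝ) (ha : ContDiffOn ℝ 2 a (Ici r₀))
    (hode : ∀ r ∈ Ici r₀,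
      derivWithin (fun s => s * (s - 2 * m) * derivWithin a (Ici r₀) s) (Ici r₀) r
        = (4 * m ^ 2 / (r * (r - 2 * m)) + (ℓ : ℝ) * ((ℓ : ℝ) + 1)) * a r
          - (2 * m / (r * (r - 2 * m))) *
            ((4 * m - r₀) * a r₀ + r₀ * (r₀ - 2 * m) * derivWithin a (Ici r₀) r₀))
    (β₀ : ℝ)
    (hβ₀ : β₀ = (2 * m / ((ℓ : ℝ) * ((ℓ : ℝ) + 1) - 2)) *
      ((4 * m - r₀) * a r₀ + r₀ * (r₀ - 2 * m) * derivWithin a (Ici r₀) r₀))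
    (B : ℝ → ℝ) (hBdef : ∀ r, B r = a r - β₀ / (r * (r - 2 * m))) :
    ∀ r ∈ Ici r₀,
      derivWithin (fun s => s * (s - 2 * m) * derivWithin B (Ici r₀) s) (Ici r₀) r
        = (4 * m ^ 2 / (r * (r - 2 * m)) + (ℓ : ℝ) * ((ℓ : ℝ) + 1)) * B r := by
  intro r hr
  have hS := uniqueDiffOn_Ici r₀
  have hS0 : ∀ s ∈ Ici r₀, s * (s - 2 * m) ≠ 0 := fun s hs => (mul_sub_two_mul_pos hr₀ hs).ne'
  have hB : B = fun t => a t - β₀ * (t * (t - 2 * m))⁻¹ := funext fun t => by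
    rw [hBdef, div_eq_mul_inv]
  have hinv : DifferentiableOn ℝ (fun t => (t * (t - 2 * m))⁻¹) (Ici r₀) := fun s hs =>
    (hasDerivAt_inv_mul_sub (hS0 s hs)).differentiableAt.differentiableWithinAt
  have hflux_a : DifferentiableWithinAt ℝ
      (fun s => s * (s - 2 * m) * derivWithin a (Ici r₀) s) (Ici r₀) r :=
    (differentiableWithinAt_id.mul (differentiableWithinAt_id.sub_const _)).mul
      ((ha.derivWithin (m := 1) hS (by norm_num)).differentiableOn (by norm_num) r hr)
  have hflux_inv := hasDerivWithinAt_mul_derivWithin_inv_mul_sub hS hS0 hr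
  have hsource : β₀ * ((ℓ : ℝ) * ((ℓ : ℝ) + 1) - 2)
      = 2 * m * ((4 * m - r₀) * a r₀ + r₀ * (r₀ - 2 * m) * derivWithin a (Ici r₀) r₀) := by
    rw [hβ₀]
    field_simp [natCast_mul_add_one_sub_two_ne_zero hℓ]
  rw [hB, derivWithin_mul_derivWithin_sub_const_mul hr (ha.differentiableOn (by norm_num))
    hinv hflux_a hflux_inv.differentiableWithinAt, hode r hr, hflux_inv.derivWithin (hS r hr)]
  linear_combination (r * (r - 2 * m))⁻¹ * hsource
end
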